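/- arXiv:1410.0341 — 4 statements merged into one kernel-verified Lean document; each statement's English description precedes it below -/
import Mathlib

section
/- Let m ≥ 1 and let A_0, A_1 be smooth vector fields on ℝ × ℝ^m whose first (time) components are the constant functions 1 and 0 respectively. Let 𝚲-family be the smallest set of smooth vector fields on ℝ × ℝ^m containing {A_0, A_1} and closed under the operations V ↦ [A_0, V] and V ↦ [A_1, V], and let 𝓛-family be the smallest such set containing {A_1} and closed under the same two operations. For (t,x) ∈ ℝ × ℝ^m define Λ(t,x) := span{V(t,x) : V ∈ 𝚲-family} ⊆ ℝ^{1+m} and 𝓛(t,x) := span{V(t,x) : V ∈ 𝓛-family} ⊆ ℝ^{1+m}. Then for every (t,x) ∈ ℝ × ℝ^m, dim Λ(t,x) = dim 𝓛(t,x) + 1. -/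
/-- The Lie bracket of two vector fields on a normed space, defined pointwise by
`[X, Y](p) = (DY)(p)(X(p)) − (DX)(p)(Y(p))` where `D` is the Fréchet derivative. -/
noncomputable def lieBracket {E : Type*} [NormedAddCommGroup E] [NormedSpace ℝ E]
    (X Y : E → E) (p : E) : E :=
  fderiv ℝ Y p (X p) - fderiv ℝ X p (Y p)

/-- The smallest family of vector fields containing the set `S` and closed under the
operations `V ↦ [A0, V]` and `V ↦ [A1, V]`. -/
inductive LieFam {E : Type*} [NormedAddCommGroup E] [NormedSpace ℝ E]
    (A0 A1 : E → E) (S : Set (E → E)) : (E → E) → Prop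
  | base (V : E → E) (hV : V ∈ S) : LieFam A0 A1 S V
  | br0 (V : E → E) (hV : LieFam A0 A1 S V) : LieFam A0 A1 S (lieBracket A0 V)
  | br1 (V : E → E) (hV : LieFam A0 A1 S V) : LieFam A0 A1 S (lieBracket A1 V)

section aux

variable {E : Type*} [NormedAddCommGroup E] [NormedSpace ℝ E]

lemma contDiff_lieBracket {X Y : E → E} (hX : ContDiff ℝ (⊤ : ℕ∞) X) (hY : ContDiff ℝ (⊤ : ℕ∞) Y) :
    ContDiff ℝ (⊤ : ℕ∞) (lieBracket X Y) := by
  have h1 : ContDiff ℝ (⊤ : ℕ∞) (fun p => fderiv ℝ Y p) := hY.fderiv_right (by simp)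
  have h2 : ContDiff ℝ (⊤ : ℕ∞) (fun p => fderiv ℝ X p) := hX.fderiv_right (by simp)
  exact (h1.clm_apply hX).sub (h2.clm_apply hY)

lemma lieBracket_self (X : E → E) : lieBracket X X = fun _ => 0 := by
  funext p; simp [lieBracket]

lemma lieBracket_smul (X : E → E) (c : ℝ) {W : E → E} (hW : Differentiable ℝ W) :
    lieBracket X (c • W) = c • lieBracket X W := by
  funext p
  have h1 : fderiv ℝ (c • W) p = c • fderiv ℝ W p := fderiv_const_smul (hW p) c
  simp only [lieBracket, Pi.smul_apply, h1]
  simp [smul_sub]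

lemma lieBracket_swap (X Y : E → E) :
    lieBracket Y X = (-1 : ℝ) • lieBracket X Y := by
  funext p
  simp [lieBracket]

/-- Monotonicity of `LieFam` in the generating set. -/
lemma LieFam.mono {A0 A1 : E → E} {S T : Set (E → E)} (hST : S ⊆ T) {V : E → E}
    (hV : LieFam A0 A1 S V) : LieFam A0 A1 T V := by
  induction hV with
  | base V hV => exact LieFam.base V (hST hV)
  | br0 V _ ih => exact LieFam.br0 V ih
  | br1 V _ ih => exact LieFam.br1 V ih

end aux

section fst

variable {m : ℕ}

/-- If the first component of `f` is constant and `f` is differentiable at `p`,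
then the first component of `fderiv f p w` is zero. -/
lemma fst_fderiv_zero {f : (ℝ × (Fin m → ℝ)) → (ℝ × (Fin m → ℝ))} {p : ℝ × (Fin m → ℝ)}
    (hf : DifferentiableAt ℝ f p) {c : ℝ} (hc : ∀ q, (f q).1 = c)
    (w : ℝ × (Fin m → ℝ)) : (fderiv ℝ f p w).1 = 0 := by
  have h1 : HasFDerivAt (fun x => (f x).1)
      ((ContinuousLinearMap.fst ℝ ℝ (Fin m → ℝ)).comp (fderiv ℝ f p)) p :=
    hf.hasFDerivAt.fst
  have h2 : (fun x => (f x).1) = fun _ => c := funext hc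
  rw [h2] at h1
  have h3 := h1.unique (hasFDerivAt_const c p)
  have := congrArg (fun L => L w) h3
  simpa using this

/-- Every field in the family generated by `{A1}` is smooth with zero time component. -/
lemma L_props (A0 A1 : (ℝ × (Fin m → ℝ)) → (ℝ × (Fin m → ℝ)))
    (hA0 : ContDiff ℝ (⊤ : ℕ∞) A0) (hA1 : ContDiff ℝ (⊤ : ℕ∞) A1)
    (hA0t : ∀ p, (A0 p).1 = 1) (hA1t : ∀ p, (A1 p).1 = 0) :
    ∀ V, LieFam A0 A1 {A1} V → ContDiff ℝ (⊤ : ℕ∞) V ∧ ∀ q, (V q).1 = 0 := by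
  intro V hV
  induction hV with
  | base V hV => rw [Set.mem_singleton_iff] at hV; subst hV; exact ⟨hA1, hA1t⟩
  | br0 V hV ih =>
      refine ⟨contDiff_lieBracket hA0 ih.1, fun q => ?_⟩
      show (fderiv ℝ V q (A0 q) - fderiv ℝ A0 q (V q)).1 = 0
      rw [Prod.fst_sub,
        fst_fderiv_zero (ih.1.differentiable (by simp) q) ih.2,
        fst_fderiv_zero (hA0.differentiable (by simp) q) hA0t, sub_zero]
  | br1 V hV ih =>
      refine ⟨contDiff_lieBracket hA1 ih.1, fun q => ?_⟩
      show (fderiv ℝ V q (A1 q) - fderiv ℝ A1 q (V q)).1 = 0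
      rw [Prod.fst_sub,
        fst_fderiv_zero (ih.1.differentiable (by simp) q) ih.2,
        fst_fderiv_zero (hA1.differentiable (by simp) q) hA1t, sub_zero]

/-- Every field in the family generated by `{A0, A1}` is either `A0` itself or a scalar
multiple of a field in the family generated by `{A1}`. -/
lemma Lam_class (A0 A1 : (ℝ × (Fin m → ℝ)) → (ℝ × (Fin m → ℝ)))
    (hA0 : ContDiff ℝ (⊤ : ℕ∞) A0) (hA1 : ContDiff ℝ (⊤ : ℕ∞) A1)
    (hA0t : ∀ p, (A0 p).1 = 1) (hA1t : ∀ p, (A1 p).1 = 0) :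
    ∀ V, LieFam A0 A1 {A0, A1} V →
      V = A0 ∨ ∃ (c : ℝ) (W : _), LieFam A0 A1 {A1} W ∧ V = c • W := by
  intro V hV
  induction hV with
  | base V hV =>
      rcases hV with h | h
      · exact Or.inl h
      · exact Or.inr ⟨1, A1, LieFam.base A1 rfl, by rw [h, one_smul]⟩
  | br0 V hV ih =>
      rcases ih with h | ⟨c, W, hW, hVW⟩
      · refine Or.inr ⟨0, A1, LieFam.base A1 rfl, ?_⟩
        rw [h, lieBracket_self, zero_smul]; rfl
      · subst hVW
        have hWd : Differentiable ℝ W :=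
          ((L_props A0 A1 hA0 hA1 hA0t hA1t W hW).1).differentiable (by simp)
        exact Or.inr ⟨c, lieBracket A0 W, LieFam.br0 W hW, lieBracket_smul A0 c hWd⟩
  | br1 V hV ih =>
      rcases ih with h | ⟨c, W, hW, hVW⟩
      · refine Or.inr ⟨-1, lieBracket A0 A1,
          LieFam.br0 A1 (LieFam.base A1 rfl), ?_⟩
        rw [h]; exact lieBracket_swap A0 A1
      · subst hVW
        have hWd : Differentiable ℝ W :=
          ((L_props A0 A1 hA0 hA1 hA0t hA1t W hW).1).differentiable (by simp)
        exact Or.inr ⟨c, lieBracket A1 W, LieFam.br1 W hW, lieBracket_smul A1 c hWd⟩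

end fst

/-- Proposition `algebras`: at every point, the dimension of the span of the values of the
family generated by `{A0, A1}` exceeds by exactly one the dimension of the span of the
values of the family generated by `{A1}`. -/
theorem stmt_2 (m : ℕ) (hm : 1 ≤ m)
    (A0 A1 : (ℝ × (Fin m → ℝ)) → (ℝ × (Fin m → ℝ)))
    (hA0 : ContDiff ℝ (⊤ : ℕ∞) A0) (hA1 : ContDiff ℝ (⊤ : ℕ∞) A1)
    (hA0t : ∀ p, (A0 p).1 = 1) (hA1t : ∀ p, (A1 p).1 = 0) :
    ∀ p : ℝ × (Fin m → ℝ),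
      Module.finrank ℝ
        (Submodule.span ℝ {w : ℝ × (Fin m → ℝ) | ∃ V, LieFam A0 A1 {A0, A1} V ∧ V p = w})
      = Module.finrank ℝ
        (Submodule.span ℝ {w : ℝ × (Fin m → ℝ) | ∃ V, LieFam A0 A1 {A1} V ∧ V p = w}) + 1 := by
  intro p
  set SL : Set (ℝ × (Fin m → ℝ)) := {w | ∃ V, LieFam A0 A1 {A1} V ∧ V p = w} with hSL
  set SΛ : Set (ℝ × (Fin m → ℝ)) := {w | ∃ V, LieFam A0 A1 {A0, A1} V ∧ V p = w} with hSΛ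
  -- Step 1: span SΛ = span (insert (A0 p) SL)
  have hspan : Submodule.span ℝ SΛ = Submodule.span ℝ (insert (A0 p) SL) := by
    apply le_antisymm
    · rw [Submodule.span_le]
      rintro w ⟨V, hV, rfl⟩
      rcases Lam_class A0 A1 hA0 hA1 hA0t hA1t V hV with h | ⟨c, W, hW, rfl⟩
      · subst h
        exact Submodule.subset_span (Set.mem_insert _ _)
      · have : W p ∈ Submodule.span ℝ (insert (A0 p) SL) :=
          Submodule.subset_span (Set.mem_insert_iff.mpr (Or.inr ⟨W, hW, rfl⟩))
        simpa using Submodule.smul_mem _ c this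
    · rw [Submodule.span_le]
      rintro w hw
      rcases Set.mem_insert_iff.mp hw with h | ⟨V, hV, rfl⟩
      · subst h
        exact Submodule.subset_span ⟨A0, LieFam.base A0 (Or.inl rfl), rfl⟩
      · exact Submodule.subset_span ⟨V, hV.mono (by intro x hx; exact Or.inr hx), rfl⟩
  -- Step 2: A0 p ∉ span SL since everything in SL has zero first component
  have hker : Submodule.span ℝ SL ≤ LinearMap.ker (LinearMap.fst ℝ ℝ (Fin m → ℝ)) := by
    rw [Submodule.span_le]
    rintro w ⟨V, hV, rfl⟩
    exact (L_props A0 A1 hA0 hA1 hA0t hA1t V hV).2 p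
  have hA0notin : A0 p ∉ Submodule.span ℝ SL := by
    intro h
    have := hker h
    rw [LinearMap.mem_ker] at this
    simp only [LinearMap.fst_apply] at this
    rw [hA0t p] at this
    exact one_ne_zero this
  -- Step 3: finrank computation
  have hA0ne : A0 p ≠ 0 := fun h => by
    have := hA0t p; rw [h] at this; simpa using this
  rw [hspan, Submodule.span_insert]
  have hinf : (ℝ ∙ A0 p) ⊓ Submodule.span ℝ SL = ⊥ := by
    rw [eq_bot_iff]
    rintro x ⟨hx1, hx2⟩
    rcases Submodule.mem_span_singleton.mp hx1 with ⟨c, rfl⟩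
    rcases eq_or_ne c 0 with rfl | hc
    · simp
    · exfalso
      apply hA0notin
      have : c⁻¹ • (c • A0 p) ∈ Submodule.span ℝ SL := Submodule.smul_mem _ _ hx2
      rwa [smul_smul, inv_mul_cancel₀ hc, one_smul] at this
  have := Submodule.finrank_sup_add_finrank_inf_eq (ℝ ∙ A0 p) (Submodule.span ℝ SL)
  rw [hinf] at this
  simp only [finrank_bot, add_zero] at this
  rw [this, finrank_span_singleton hA0ne, add_comm]
end

section
/- Fix m ≥ 2, smooth functions F : ℝ^{m−1} → ℝ, a_i, b_i : ℝ → ℝ (2 ≤ i ≤ m−1), g̃ : ℝ × ℝ → ℝ, σ : ℝ → ℝ. Then for every k ≥ 1 there exist smooth functions Φ_1^{(k)}, …, Φ_{k−1}^{(k)} : ℝ → ℝ and Φ^{(k)} : ℝ × ℝ → ℝ such that for all (t,x) ∈ ℝ × ℝ^m, the iterated bracket L_k(t,x) has time component 0 and space component Σ_{i=1}^{m−1} σ(x_m)^k (∂^k J_i/∂x_1^k)(x) e_i + Σ_{ℓ=1}^{k−1} Φ_ℓ^{(k)}(x_m) Σ_{i=1}^{m−1} (∂^ℓ J_i/∂x_1^ℓ)(x)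 e_i + Φ^{(k)}(t, x_m)(e_1 + e_m). -/
open scoped BigOperators

/-- The `i`-th standard basis vector of `ℝ^m`. -/
def stdVec (m : ℕ) (i : Fin m) : Fin m → ℝ := Pi.single i 1

/-- Projection of `ℝ^m` (with `m = n+2`) onto its first `m − 1` coordinates. -/
def projFirst (n : ℕ) (x : Fin (n + 2) → ℝ) : Fin (n + 1) → ℝ := fun i => x i.castSucc

/-- The coefficients `J_1(x) = F(x_1,…,x_{m−1})` and `J_i(x) = −a_i(x_1) x_i + b_i(x_1)`
(`2 ≤ i ≤ m−1`), as functions on `ℝ^{m−1}` with `m − 1 = n + 1`; the index `j : Fin (n+1)`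
corresponds to `i = j + 1`. -/
noncomputable def Jfun (n : ℕ) (F : (Fin (n + 1) → ℝ) → ℝ) (a b : Fin (n + 1) → ℝ → ℝ) :
    Fin (n + 1) → (Fin (n + 1) → ℝ) → ℝ :=
  fun j y => if j = 0 then F y else -(a j (y 0)) * y j + b j (y 0)

/-- The drift `b̃` of the system with internal variables and random input:
`b̃_1 = J_1 + g̃(t, x_m)`, `b̃_i = J_i` for `2 ≤ i ≤ m−1`, `b̃_m = g̃(t, x_m)`. -/
noncomputable def driftIV (n : ℕ) (F : (Fin (n + 1) → ℝ) → ℝ) (a b : Fin (n + 1) → ℝ → ℝ)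
    (g : ℝ → ℝ → ℝ) (p : ℝ × (Fin (n + 2) → ℝ)) : Fin (n + 2) → ℝ :=
  fun k => Fin.lastCases (motive := fun _ => ℝ)
    (g p.1 (p.2 (Fin.last (n + 1))))
    (fun j => Jfun n F a b j (projFirst n p.2) +
      if j = 0 then g p.1 (p.2 (Fin.last (n + 1))) else 0) k

/-- The drift vector field `A_0(t,x) = (1, b̃(t,x))` on `ℝ × ℝ^m`. -/
noncomputable def A0f (n : ℕ) (F : (Fin (n + 1) → ℝ) → ℝ) (a b : Fin (n + 1) → ℝ → ℝ)
    (g : ℝ → ℝ → ℝ) (p : ℝ × (Fin (n + 2) → ℝ)) : ℝ × (Fin (n + 2) → ℝ) :=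
  (1, driftIV n F a b g p)

/-- The diffusion vector field `A_1(t,x) = (0, σ(x_m)(e_1 + e_m))` on `ℝ × ℝ^m`. -/
noncomputable def A1f (n : ℕ) (σ : ℝ → ℝ) (p : ℝ × (Fin (n + 2) → ℝ)) :
    ℝ × (Fin (n + 2) → ℝ) :=
  (0, σ (p.2 (Fin.last (n + 1))) • (stdVec (n + 2) 0 + stdVec (n + 2) (Fin.last (n + 1))))

/-- The iterated brackets: `Lbr A1 A0 0 = [A_1, A_0] = L_1` and
`Lbr A1 A0 (k+1) = [A_1, Lbr A1 A0 k]`, so that `L_k = Lbr A1 A0 (k−1)`. -/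
noncomputable def Lbr {E : Type*} [NormedAddCommGroup E] [NormedSpace ℝ E]
    (A1 A0 : E → E) : ℕ → (E → E)
  | 0 => lieBracket A1 A0
  | (k + 1) => lieBracket A1 (Lbr A1 A0 k)

/-- Partial derivative in the first coordinate of a function on `ℝ^{m−1}`. -/
noncomputable def pd1 (n : ℕ) (f : (Fin (n + 1) → ℝ) → ℝ) : (Fin (n + 1) → ℝ) → ℝ :=
  fun y => fderiv ℝ f y (stdVec (n + 1) 0)

namespace Aux
variable (n : ℕ) (σ : ℝ → ℝ)

noncomputable def e1m : ℝ × (Fin (n+2) → ℝ) :=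
  ((0:ℝ), stdVec (n+2) 0 + stdVec (n+2) (Fin.last (n+1)))
noncomputable def wv (i : Fin (n+1)) : ℝ × (Fin (n+2) → ℝ) := ((0:ℝ), stdVec (n+2) i.castSucc)

/-- eval of the last space coordinate, as a CLM -/
noncomputable def evL : (ℝ × (Fin (n+2) → ℝ)) →L[ℝ] ℝ :=
  (ContinuousLinearMap.proj (Fin.last (n+1))).comp (ContinuousLinearMap.snd ℝ ℝ _)

/-- p ↦ (p.2 last, projFirst p.2) as a CLM -/
noncomputable def lam : (ℝ × (Fin (n+2) → ℝ)) →L[ℝ] (ℝ × (Fin (n+1) → ℝ)) :=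
  (evL n).prod ((ContinuousLinearMap.pi (fun i : Fin (n+1) =>
    ContinuousLinearMap.proj (i.castSucc))).comp (ContinuousLinearMap.snd ℝ ℝ _))

/-- p ↦ (p.1, p.2 last) as a CLM -/
noncomputable def lamT : (ℝ × (Fin (n+2) → ℝ)) →L[ℝ] (ℝ × ℝ) :=
  (ContinuousLinearMap.fst ℝ ℝ _).prod (evL n)

lemma lam_apply (p : ℝ × (Fin (n+2) → ℝ)) :
    lam n p = (p.2 (Fin.last (n+1)), projFirst n p.2) := rfl

lemma lamT_apply (p : ℝ × (Fin (n+2) → ℝ)) : lamT n p = (p.1, p.2 (Fin.last (n+1))) := rfl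

noncomputable def Gfun (c : Fin (n+1) → ℝ × (Fin (n+1) → ℝ) → ℝ) (φ : ℝ → ℝ → ℝ)
    (p : ℝ × (Fin (n+2) → ℝ)) : ℝ × (Fin (n+2) → ℝ) :=
  (∑ i : Fin (n+1), c i (lam n p) • wv n i) + φ p.1 (p.2 (Fin.last (n+1))) • e1m n

noncomputable def Top (c : ℝ × (Fin (n+1) → ℝ) → ℝ) (q : ℝ × (Fin (n+1) → ℝ)) : ℝ :=
  σ q.1 * fderiv ℝ c q (1, stdVec (n+1) 0)

noncomputable def Sop (φ : ℝ → ℝ → ℝ) : ℝ → ℝ → ℝ := fun t u =>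
  σ u * fderiv ℝ (Function.uncurry φ) (t,u) ((0:ℝ),(1:ℝ)) - deriv σ u * φ t u

lemma lam_e1m : lam n (e1m n) = ((1:ℝ), stdVec (n+1) 0) := by
  rw [lam_apply]
  refine Prod.ext ?_ ?_
  · simp [e1m, stdVec, Pi.single_apply, (Fin.castSucc_lt_last _).ne]
  · funext j
    simp only [e1m, projFirst, Pi.add_apply, stdVec, Pi.single_apply]
    have h1 : (j.castSucc = (0 : Fin (n+2))) ↔ (j = 0) := by
      constructor
      · intro h; exact Fin.castSucc_injective _ (by simpa using h)
      · intro h; subst h; rfl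
    have h2 : j.castSucc ≠ Fin.last (n+1) := (Fin.castSucc_lt_last j).ne
    simp [h1, h2]

lemma lamT_e1m : lamT n (e1m n) = ((0:ℝ), (1:ℝ)) := by
  rw [lamT_apply]
  refine Prod.ext rfl ?_
  simp [e1m, stdVec, Pi.single_apply, (Fin.castSucc_lt_last _).ne]

lemma evL_wv (i : Fin (n+1)) : evL n (wv n i) = 0 := by
  show stdVec (n+2) i.castSucc (Fin.last (n+1)) = 0
  simp [stdVec, Pi.single_apply, (Fin.castSucc_lt_last i).ne]

lemma evL_e1m : evL n (e1m n) = 1 := by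
  show (stdVec (n+2) 0 + stdVec (n+2) (Fin.last (n+1))) (Fin.last (n+1)) = 1
  have h : (Fin.last (n+1)) ≠ 0 := Fin.last_pos.ne'
  simp [stdVec, Pi.single_apply, h]

end Aux

namespace Aux
variable {n : ℕ} {σ : ℝ → ℝ}


lemma A1f_eq (p : ℝ × (Fin (n+2) → ℝ)) : A1f n σ p = σ (evL n p) • e1m n := by
  show _ = σ (p.2 (Fin.last (n+1))) • e1m n
  rw [e1m, Prod.smul_mk, smul_zero, A1f]

lemma hasFDerivAt_A1 (hσ : ContDiff ℝ (⊤ : ℕ∞) σ) (p : ℝ × (Fin (n+2) → ℝ)) :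
    HasFDerivAt (A1f n σ)
      ((deriv σ (p.2 (Fin.last (n+1))) • evL n).smulRight (e1m n)) p := by
  have h1 : HasFDerivAt (σ ∘ (evL n)) (deriv σ (evL n p) • evL n) p :=
    HasDerivAt.comp_hasFDerivAt p ((hσ.differentiable (by simp) _).hasDerivAt)
      (evL n).hasFDerivAt
  have h2 := h1.smul_const (e1m n)
  have : (fun y => (σ ∘ (evL n)) y • e1m n) = A1f n σ := by
    funext y; rw [A1f_eq]; rfl
  rw [this] at h2
  exact h2

end Aux

namespace Aux
variable {n : ℕ} {σ : ℝ → ℝ} {c : Fin (n+1) → ℝ × (Fin (n+1) → ℝ) → ℝ} {φ : ℝ → ℝ → ℝ}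


noncomputable def Gder (c : Fin (n+1) → ℝ × (Fin (n+1) → ℝ) → ℝ) (φ : ℝ → ℝ → ℝ)
    (p : ℝ × (Fin (n+2) → ℝ)) : (ℝ × (Fin (n+2) → ℝ)) →L[ℝ] (ℝ × (Fin (n+2) → ℝ)) :=
  (∑ i : Fin (n+1), ((fderiv ℝ (c i) (lam n p)).comp (lam n)).smulRight (wv n i)) +
    ((fderiv ℝ (Function.uncurry φ) (lamT n p)).comp (lamT n)).smulRight (e1m n)

lemma hasFDerivAt_G (hc : ∀ i, ContDiff ℝ (⊤ : ℕ∞) (c i))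
    (hφ : ContDiff ℝ (⊤ : ℕ∞) (Function.uncurry φ)) (v₀ : ℝ × (Fin (n+2) → ℝ))
    (p : ℝ × (Fin (n+2) → ℝ)) :
    HasFDerivAt (fun p => v₀ + Gfun n c φ p) (Gder c φ p) p := by
  have hterm : ∀ i : Fin (n+1), HasFDerivAt (fun p => c i (lam n p) • wv n i)
      (((fderiv ℝ (c i) (lam n p)).comp (lam n)).smulRight (wv n i)) p := fun i =>
    ((((hc i).differentiable (by simp)).differentiableAt.hasFDerivAt).comp p
      (lam n).hasFDerivAt).smul_const (wv n i)
  have hsum : HasFDerivAt (fun p => ∑ i : Fin (n+1), c i (lam n p) • wv n i)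
      (∑ i : Fin (n+1), ((fderiv ℝ (c i) (lam n p)).comp (lam n)).smulRight (wv n i)) p := by
    have := HasFDerivAt.fun_sum (u := Finset.univ) (fun i _ => hterm i)
    simpa using this
  have hphi : HasFDerivAt (fun p : ℝ × (Fin (n+2) → ℝ) =>
        φ p.1 (p.2 (Fin.last (n+1))) • e1m n)
      (((fderiv ℝ (Function.uncurry φ) (lamT n p)).comp (lamT n)).smulRight (e1m n)) p :=
    (((hφ.differentiable (by simp)).differentiableAt.hasFDerivAt).comp p
      (lamT n).hasFDerivAt).smul_const (e1m n)
  exact ((hsum.add hphi).const_add v₀)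

lemma bracket_G (hσ : ContDiff ℝ (⊤ : ℕ∞) σ) (hc : ∀ i, ContDiff ℝ (⊤ : ℕ∞) (c i))
    (hφ : ContDiff ℝ (⊤ : ℕ∞) (Function.uncurry φ)) (v₀ : ℝ × (Fin (n+2) → ℝ))
    (hv : evL n v₀ = 0) :
    lieBracket (A1f n σ) (fun p => v₀ + Gfun n c φ p) =
      Gfun n (fun i => Top n σ (c i)) (Sop σ φ) := by
  funext p
  have hG := hasFDerivAt_G hc hφ v₀ p
  have hA := hasFDerivAt_A1 hσ p
  rw [lieBracket, hG.fderiv, hA.fderiv]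
  have hA1p : A1f n σ p = σ (p.2 (Fin.last (n+1))) • e1m n := A1f_eq p
  rw [hA1p]
  rw [Gder]
  simp only [ContinuousLinearMap.add_apply, ContinuousLinearMap.sum_apply,
    ContinuousLinearMap.smulRight_apply, ContinuousLinearMap.comp_apply,
    map_smul, map_add, map_sum, lam_e1m, lamT_e1m, evL_wv, evL_e1m,
    smul_eq_mul, mul_zero, mul_one]
  simp only [ContinuousLinearMap.smul_apply, map_add, map_sum, map_smul, evL_wv, evL_e1m, hv,
    smul_eq_mul, mul_zero, mul_one, Finset.sum_const_zero, add_zero, zero_add, zero_mul,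
    zero_smul, smul_add, Finset.smul_sum, smul_smul, Gfun, Top, Sop, lam_apply, lamT_apply,
    sub_smul]
  rw [mul_comm (deriv σ (p.2 (Fin.last (n+1)))) (φ p.1 (p.2 (Fin.last (n+1))))]
  abel

end Aux

namespace Aux
variable {n : ℕ} {σ : ℝ → ℝ} {F : (Fin (n + 1) → ℝ) → ℝ} {a b : Fin (n + 1) → ℝ → ℝ}
  {g : ℝ → ℝ → ℝ}

lemma contDiff_deriv1 {f : ℝ → ℝ} (hf : ContDiff ℝ (⊤ : ℕ∞) f) : ContDiff ℝ (⊤ : ℕ∞) (deriv f) := by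
  have h := (hf.fderiv_right (m := (⊤ : ℕ∞)) (by simp)).clm_apply
    (contDiff_const (c := (1:ℝ)))
  have he : (fun x => fderiv ℝ f x 1) = deriv f := by
    funext x; exact fderiv_apply_one_eq_deriv
  rwa [he] at h

lemma contDiff_pd1 {f : (Fin (n+1) → ℝ) → ℝ} (hf : ContDiff ℝ (⊤ : ℕ∞) f) :
    ContDiff ℝ (⊤ : ℕ∞) (pd1 n f) :=
  (hf.fderiv_right (m := (⊤ : ℕ∞)) (by simp)).clm_apply contDiff_const

lemma contDiff_pd1_iter {f : (Fin (n+1) → ℝ) → ℝ} (hf : ContDiff ℝ (⊤ : ℕ∞) f) (k : ℕ) :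
    ContDiff ℝ (⊤ : ℕ∞) ((pd1 n)^[k] f) := by
  induction k with
  | zero => exact hf
  | succ k ih => rw [Function.iterate_succ_apply']; exact contDiff_pd1 ih

lemma contDiff_Top (hσ : ContDiff ℝ (⊤ : ℕ∞) σ) {c : ℝ × (Fin (n+1) → ℝ) → ℝ}
    (hc : ContDiff ℝ (⊤ : ℕ∞) c) : ContDiff ℝ (⊤ : ℕ∞) (Top n σ c) :=
  (hσ.comp contDiff_fst).mul
    ((hc.fderiv_right (m := (⊤ : ℕ∞)) (by simp)).clm_apply contDiff_const)

lemma contDiff_Top_iter (hσ : ContDiff ℝ (⊤ : ℕ∞) σ) {c : ℝ × (Fin (n+1) → ℝ) → ℝ}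
    (hc : ContDiff ℝ (⊤ : ℕ∞) c) (k : ℕ) : ContDiff ℝ (⊤ : ℕ∞) ((Top n σ)^[k] c) := by
  induction k with
  | zero => exact hc
  | succ k ih => rw [Function.iterate_succ_apply']; exact contDiff_Top hσ ih

lemma contDiff_Sop (hσ : ContDiff ℝ (⊤ : ℕ∞) σ) {φ : ℝ → ℝ → ℝ}
    (hφ : ContDiff ℝ (⊤ : ℕ∞) (Function.uncurry φ)) :
    ContDiff ℝ (⊤ : ℕ∞) (Function.uncurry (Sop σ φ)) := by
  have h1 : ContDiff ℝ (⊤ : ℕ∞) (fun q : ℝ × ℝ =>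
      fderiv ℝ (Function.uncurry φ) q ((0:ℝ),(1:ℝ))) :=
    (hφ.fderiv_right (m := (⊤ : ℕ∞)) (by simp)).clm_apply contDiff_const
  have he : Function.uncurry (Sop σ φ) = fun q : ℝ × ℝ =>
      σ q.2 * fderiv ℝ (Function.uncurry φ) q ((0:ℝ),(1:ℝ)) -
        deriv σ q.2 * Function.uncurry φ q := rfl
  rw [he]
  exact ((hσ.comp contDiff_snd).mul h1).sub
    (((contDiff_deriv1 hσ).comp contDiff_snd).mul hφ)

lemma contDiff_Sop_iter (hσ : ContDiff ℝ (⊤ : ℕ∞) σ) {φ : ℝ → ℝ → ℝ}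
    (hφ : ContDiff ℝ (⊤ : ℕ∞) (Function.uncurry φ)) (k : ℕ) :
    ContDiff ℝ (⊤ : ℕ∞) (Function.uncurry ((Sop σ)^[k] φ)) := by
  induction k with
  | zero => exact hφ
  | succ k ih => rw [Function.iterate_succ_apply']; exact contDiff_Sop hσ ih

lemma contDiff_J (hF : ContDiff ℝ (⊤ : ℕ∞) F) (ha : ∀ i, ContDiff ℝ (⊤ : ℕ∞) (a i))
    (hb : ∀ i, ContDiff ℝ (⊤ : ℕ∞) (b i)) (i : Fin (n+1)) :
    ContDiff ℝ (⊤ : ℕ∞) (Jfun n F a b i) := by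
  rcases eq_or_ne i 0 with h | h
  · have : Jfun n F a b i = F := by funext y; simp [Jfun, h]
    rw [this]; exact hF
  · have : Jfun n F a b i = fun y => -(a i (y 0)) * y i + b i (y 0) := by
      funext y; simp [Jfun, h]
    rw [this]
    have hev : ∀ j : Fin (n+1), ContDiff ℝ (⊤ : ℕ∞) (fun y : Fin (n+1) → ℝ => y j) :=
      fun j => contDiff_apply ℝ ℝ j
    exact ((((ha i).comp (hev 0)).neg.mul (hev i)).add ((hb i).comp (hev 0)))

lemma A0f_eq : A0f n F a b g = fun p => ((1:ℝ), (0 : Fin (n+2) → ℝ)) +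
    Gfun n (fun i q => Jfun n F a b i q.2) g p := by
  funext p
  refine Prod.ext ?_ ?_
  · simp [A0f, Gfun, Prod.fst_sum, wv, e1m]
  · show driftIV n F a b g p = _
    funext k
    induction k using Fin.lastCases with
    | last =>
      have h0 : ((0 : Fin (n+1)) : Fin (n+1)).castSucc ≠ Fin.last (n+1) :=
        (Fin.castSucc_lt_last _).ne
      simp only [driftIV, Fin.lastCases_last, Gfun, Prod.snd_add, Prod.snd_sum, wv, e1m,
        Pi.add_apply, Finset.sum_apply, Pi.smul_apply, smul_eq_mul, Pi.zero_apply,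
        stdVec, Pi.single_apply]
      rw [Finset.sum_eq_zero]
      · simp [Fin.last_pos.ne']
      · intro i _
        simp [(Fin.castSucc_lt_last i).ne]
    | cast j =>
      simp only [driftIV, Fin.lastCases_castSucc, Gfun, Prod.snd_add, Prod.snd_sum, wv, e1m,
        Pi.add_apply, Finset.sum_apply, Pi.smul_apply, smul_eq_mul, Pi.zero_apply,
        stdVec, Pi.single_apply]
      rw [Finset.sum_eq_single j]
      · have hcast0 : (j.castSucc = (0:Fin (n+1)).castSucc) ↔ (j = 0) :=
          ⟨fun h => Fin.castSucc_injective _ h, fun h => by rw [h]⟩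
        have : ((0:Fin (n+1)).castSucc : Fin (n+2)) = 0 := by simp
        by_cases hj : j = 0 <;>
          simp [hj, (Fin.castSucc_lt_last j).ne, this, lam_apply] <;> ring
      · intro i _ hij
        have : j.castSucc ≠ i.castSucc := fun h => hij (Fin.castSucc_injective _ h).symm
        simp [this]
      · intro h; exact absurd (Finset.mem_univ j) h

lemma Lbr_eq (hσ : ContDiff ℝ (⊤ : ℕ∞) σ) (hF : ContDiff ℝ (⊤ : ℕ∞) F)
    (ha : ∀ i, ContDiff ℝ (⊤ : ℕ∞) (a i)) (hb : ∀ i, ContDiff ℝ (⊤ : ℕ∞) (b i))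
    (hg : ContDiff ℝ (⊤ : ℕ∞) (Function.uncurry g)) (k : ℕ) :
    Lbr (A1f n σ) (A0f n F a b g) k =
      Gfun n (fun i => (Top n σ)^[k+1] (fun q => Jfun n F a b i q.2))
        ((Sop σ)^[k+1] g) := by
  induction k with
  | zero =>
    show lieBracket (A1f n σ) (A0f n F a b g) = _
    rw [A0f_eq]
    rw [bracket_G (c := fun i q => Jfun n F a b i q.2) (φ := g) hσ
      (fun i => (contDiff_J hF ha hb i).comp contDiff_snd) hg
      ((1:ℝ), (0 : Fin (n+2) → ℝ)) (by simp [evL])]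
    rfl
  | succ k ih =>
    show lieBracket (A1f n σ) (Lbr (A1f n σ) (A0f n F a b g) k) = _
    rw [ih]
    have hz : Gfun n (fun i => (Top n σ)^[k+1] (fun q => Jfun n F a b i q.2))
        ((Sop σ)^[k+1] g) = fun p => ((0:ℝ), (0 : Fin (n+2) → ℝ)) +
        Gfun n (fun i => (Top n σ)^[k+1] (fun q => Jfun n F a b i q.2))
          ((Sop σ)^[k+1] g) p := by
      funext p; rw [Prod.mk_zero_zero, zero_add]
    rw [hz, bracket_G (c := fun i => (Top n σ)^[k+1] (fun q => Jfun n F a b i q.2))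
      (φ := (Sop σ)^[k+1] g) hσ
      (fun i => contDiff_Top_iter hσ ((contDiff_J hF ha hb i).comp contDiff_snd) (k+1))
      (contDiff_Sop_iter hσ hg (k+1)) ((0:ℝ), (0 : Fin (n+2) → ℝ)) (by simp [evL])]
    funext p
    congr 1
    · funext i
      rw [← Function.iterate_succ_apply' (Top n σ)]
    · rw [← Function.iterate_succ_apply' (Sop σ)]

end Aux


namespace Aux
variable {n : ℕ} {σ : ℝ → ℝ} {F : (Fin (n + 1) → ℝ) → ℝ} {a b : Fin (n + 1) → ℝ → ℝ}

lemma Top_comp_snd {f : (Fin (n+1) → ℝ) → ℝ} (hf : ContDiff ℝ (⊤ : ℕ∞) f)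
    (q : ℝ × (Fin (n+1) → ℝ)) :
    Top n σ (fun q => f q.2) q = σ q.1 * pd1 n f q.2 := by
  have h : HasFDerivAt (fun q : ℝ × (Fin (n+1) → ℝ) => f q.2)
      ((fderiv ℝ f q.2).comp (ContinuousLinearMap.snd ℝ ℝ _)) q :=
    (((hf.differentiable (by simp)).differentiableAt).hasFDerivAt).comp q
      hasFDerivAt_snd
  rw [Top, h.fderiv]; rfl

lemma Top_sum (s : Finset ℕ) (ψ : ℕ → ℝ → ℝ) (f : ℕ → (Fin (n+1) → ℝ) → ℝ)
    (hψ : ∀ ℓ, ContDiff ℝ (⊤ : ℕ∞) (ψ ℓ)) (hf : ∀ ℓ, ContDiff ℝ (⊤ : ℕ∞) (f ℓ))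
    (q : ℝ × (Fin (n+1) → ℝ)) :
    Top n σ (fun q => ∑ ℓ ∈ s, ψ ℓ q.1 * f ℓ q.2) q =
      σ q.1 * ∑ ℓ ∈ s, (deriv (ψ ℓ) q.1 * f ℓ q.2 + ψ ℓ q.1 * pd1 n (f ℓ) q.2) := by
  have hterm : ∀ ℓ, HasFDerivAt (fun q : ℝ × (Fin (n+1) → ℝ) => ψ ℓ q.1 * f ℓ q.2)
      ((ψ ℓ q.1) • ((fderiv ℝ (f ℓ) q.2).comp (ContinuousLinearMap.snd ℝ ℝ _)) +
        (f ℓ q.2) • (deriv (ψ ℓ) q.1 • (ContinuousLinearMap.fst ℝ ℝ _))) q := by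
    intro ℓ
    have h1 : HasFDerivAt (fun q : ℝ × (Fin (n+1) → ℝ) => ψ ℓ q.1)
        (deriv (ψ ℓ) q.1 • ContinuousLinearMap.fst ℝ ℝ _) q :=
      HasDerivAt.comp_hasFDerivAt q
        (((hψ ℓ).differentiable (by simp) _).hasDerivAt)
        hasFDerivAt_fst
    have h2 : HasFDerivAt (fun q : ℝ × (Fin (n+1) → ℝ) => f ℓ q.2)
        ((fderiv ℝ (f ℓ) q.2).comp (ContinuousLinearMap.snd ℝ ℝ _)) q :=
      (((hf ℓ).differentiable (by simp)).differentiableAt.hasFDerivAt).comp q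
        hasFDerivAt_snd
    exact h1.mul h2
  have hsum := HasFDerivAt.fun_sum (u := s) (fun ℓ _ => hterm ℓ)
  rw [Top, hsum.fderiv]
  simp only [ContinuousLinearMap.coe_sum', Finset.sum_apply,
    ContinuousLinearMap.add_apply, ContinuousLinearMap.smul_apply,
    ContinuousLinearMap.comp_apply, ContinuousLinearMap.coe_snd',
    ContinuousLinearMap.coe_fst', smul_eq_mul]
  rw [Finset.mul_sum, Finset.mul_sum]
  refine Finset.sum_congr rfl (fun ℓ _ => ?_)
  show σ q.1 * (ψ ℓ q.1 * fderiv ℝ (f ℓ) q.2 (stdVec (n+1) 0) +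
      f ℓ q.2 * (deriv (ψ ℓ) q.1 * 1)) = _
  rw [pd1]; ring

lemma expand (hσ : ContDiff ℝ (⊤ : ℕ∞) σ) (hF : ContDiff ℝ (⊤ : ℕ∞) F)
    (ha : ∀ i, ContDiff ℝ (⊤ : ℕ∞) (a i)) (hb : ∀ i, ContDiff ℝ (⊤ : ℕ∞) (b i)) :
    ∀ k : ℕ, ∃ Ψ : ℕ → ℝ → ℝ, (∀ ℓ, ContDiff ℝ (⊤ : ℕ∞) (Ψ ℓ)) ∧
      (∀ u, Ψ k u = σ u ^ (k+1)) ∧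
      ∀ (i : Fin (n+1)) (q : ℝ × (Fin (n+1) → ℝ)),
        (Top n σ)^[k+1] (fun q => Jfun n F a b i q.2) q =
          ∑ ℓ ∈ Finset.range (k+1), Ψ ℓ q.1 * (pd1 n)^[ℓ+1] (Jfun n F a b i) q.2 := by
  intro k
  induction k with
  | zero =>
    refine ⟨fun ℓ u => σ u ^ (ℓ+1), fun ℓ => hσ.pow _, fun u => rfl, fun i q => ?_⟩
    rw [Finset.sum_range_one]
    have := Top_comp_snd (σ := σ) (contDiff_J hF ha hb i) q
    simpa [pow_one] using this
  | succ k ih =>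
    obtain ⟨Ψ, hsm, hval, htop⟩ := ih
    refine ⟨fun ℓ u => σ u * ((if ℓ ≤ k then deriv (Ψ ℓ) u else 0) +
        (if 1 ≤ ℓ then Ψ (ℓ-1) u else 0)), ?_, ?_, ?_⟩
    · intro ℓ
      refine hσ.mul (ContDiff.add ?_ ?_)
      · split_ifs
        exacts [contDiff_deriv1 (hsm ℓ), contDiff_const]
      · split_ifs
        exacts [hsm _, contDiff_const]
    · intro u
      have h1 : ¬ (k+1 ≤ k) := Nat.not_succ_le_self k
      simp only [h1, if_false, Nat.le_add_left 1 k, if_true, zero_add,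
        Nat.add_sub_cancel, hval u]
      ring
    · intro i q
      rw [Function.iterate_succ_apply' (Top n σ)]
      have hfe : (Top n σ)^[k+1] (fun q => Jfun n F a b i q.2)
          = fun q => ∑ ℓ ∈ Finset.range (k+1),
              Ψ ℓ q.1 * (pd1 n)^[ℓ+1] (Jfun n F a b i) q.2 := funext (htop i)
      rw [hfe, Top_sum _ _ _ hsm
        (fun ℓ => contDiff_pd1_iter (contDiff_J hF ha hb i) (ℓ+1)) q]
      have hA : ∀ ℓ : ℕ, pd1 n ((pd1 n)^[ℓ+1] (Jfun n F a b i)) =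
          (pd1 n)^[ℓ+1+1] (Jfun n F a b i) :=
        fun ℓ => (Function.iterate_succ_apply' (pd1 n) (ℓ+1) _).symm
      have key : ∀ ℓ ∈ Finset.range (k+2),
          σ q.1 * ((if ℓ ≤ k then deriv (Ψ ℓ) q.1 else 0) +
            (if 1 ≤ ℓ then Ψ (ℓ-1) q.1 else 0)) *
              (pd1 n)^[ℓ+1] (Jfun n F a b i) q.2 =
          σ q.1 * ((if ℓ ≤ k then deriv (Ψ ℓ) q.1 else 0) *
              (pd1 n)^[ℓ+1] (Jfun n F a b i) q.2) +
            σ q.1 * ((if 1 ≤ ℓ then Ψ (ℓ-1) q.1 else 0) *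
              (pd1 n)^[ℓ+1] (Jfun n F a b i) q.2) := by
        intro ℓ _; ring
      have e1 : ∑ ℓ ∈ Finset.range (k+2),
          σ q.1 * ((if ℓ ≤ k then deriv (Ψ ℓ) q.1 else 0) *
            (pd1 n)^[ℓ+1] (Jfun n F a b i) q.2) =
          ∑ ℓ ∈ Finset.range (k+1),
            σ q.1 * (deriv (Ψ ℓ) q.1 * (pd1 n)^[ℓ+1] (Jfun n F a b i) q.2) := by
        rw [Finset.sum_range_succ, if_neg (Nat.not_succ_le_self k)]
        simp only [zero_mul, mul_zero, add_zero]
        refine Finset.sum_congr rfl (fun ℓ hℓ => ?_)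
        rw [if_pos (Nat.lt_succ_iff.mp (Finset.mem_range.mp hℓ))]
      have e2 : ∑ ℓ ∈ Finset.range (k+2),
          σ q.1 * ((if 1 ≤ ℓ then Ψ (ℓ-1) q.1 else 0) *
            (pd1 n)^[ℓ+1] (Jfun n F a b i) q.2) =
          ∑ ℓ ∈ Finset.range (k+1),
            σ q.1 * (Ψ ℓ q.1 * (pd1 n)^[ℓ+1+1] (Jfun n F a b i) q.2) := by
        rw [Finset.sum_range_succ']
        simp only [Nat.le_add_left 1, if_true, Nat.add_sub_cancel,
          if_neg (by norm_num : ¬ (1:ℕ) ≤ 0), zero_mul, mul_zero, add_zero]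
      rw [Finset.sum_add_distrib, Finset.sum_congr rfl key]
      conv_rhs => rw [Finset.sum_add_distrib]
      rw [e1, e2, mul_add, Finset.mul_sum, Finset.mul_sum]
      congr 1
      refine Finset.sum_congr rfl (fun ℓ _ => ?_)
      rw [hA ℓ]

end Aux

/-- The structure of the iterated bracket `L_k` (`k ≥ 1`, here `k = k0 + 1`): its time
component vanishes and its space component is
`Σ_i σ(x_m)^k ∂^k J_i/∂x_1^k e_i + Σ_{ℓ=1}^{k−1} Φ_ℓ(x_m) Σ_i ∂^ℓ J_i/∂x_1^ℓ e_i + Φ(t,x_m)(e_1+e_m)`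
for some smooth functions `Φ_ℓ`, `Φ`. -/
theorem stmt_5 (n : ℕ) (F : (Fin (n + 1) → ℝ) → ℝ) (a b : Fin (n + 1) → ℝ → ℝ)
    (g : ℝ → ℝ → ℝ) (σ : ℝ → ℝ)
    (hF : ContDiff ℝ (⊤ : ℕ∞) F) (ha : ∀ i, ContDiff ℝ (⊤ : ℕ∞) (a i)) (hb : ∀ i, ContDiff ℝ (⊤ : ℕ∞) (b i))
    (hg : ContDiff ℝ (⊤ : ℕ∞) (Function.uncurry g)) (hσ : ContDiff ℝ (⊤ : ℕ∞) σ) :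
    ∀ k0 : ℕ, ∃ (Φl : Fin k0 → ℝ → ℝ) (Φ : ℝ → ℝ → ℝ),
      (∀ ℓ, ContDiff ℝ (⊤ : ℕ∞) (Φl ℓ)) ∧ ContDiff ℝ (⊤ : ℕ∞) (Function.uncurry Φ) ∧
      ∀ (t : ℝ) (x : Fin (n + 2) → ℝ),
        (Lbr (A1f n σ) (A0f n F a b g) k0 (t, x)).1 = 0 ∧
        (Lbr (A1f n σ) (A0f n F a b g) k0 (t, x)).2 =
          (∑ i : Fin (n + 1),
            (σ (x (Fin.last (n + 1))) ^ (k0 + 1) *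
              (pd1 n)^[k0 + 1] (Jfun n F a b i) (projFirst n x)) • stdVec (n + 2) i.castSucc)
          + (∑ ℓ : Fin k0, ∑ i : Fin (n + 1),
              (Φl ℓ (x (Fin.last (n + 1))) *
                (pd1 n)^[(ℓ : ℕ) + 1] (Jfun n F a b i) (projFirst n x)) •
                  stdVec (n + 2) i.castSucc)
          + Φ t (x (Fin.last (n + 1))) •
              (stdVec (n + 2) 0 + stdVec (n + 2) (Fin.last (n + 1))) := by
  intro k0
  obtain ⟨Ψ, hsm, hval, htop⟩ := Aux.expand hσ hF ha hb k0
  refine ⟨fun ℓ => Ψ ℓ, (Aux.Sop σ)^[k0+1] g, fun ℓ => hsm ℓ,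
    Aux.contDiff_Sop_iter hσ hg (k0+1), ?_⟩
  intro t x
  have hL := congrFun (Aux.Lbr_eq hσ hF ha hb hg k0) (t, x)
  constructor
  · rw [hL]
    simp [Aux.Gfun, Aux.wv, Aux.e1m, Prod.fst_sum]
  · rw [hL]
    have hsplit : (Aux.Gfun n (fun i => (Aux.Top n σ)^[k0+1] (fun q => Jfun n F a b i q.2))
        ((Aux.Sop σ)^[k0+1] g) (t, x)).2 =
        (∑ i : Fin (n+1), ((Aux.Top n σ)^[k0+1] (fun q => Jfun n F a b i q.2)
            (x (Fin.last (n+1)), projFirst n x)) • stdVec (n+2) i.castSucc) +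
          ((Aux.Sop σ)^[k0+1] g) t (x (Fin.last (n+1))) •
            (stdVec (n+2) 0 + stdVec (n+2) (Fin.last (n+1))) := by
      simp [Aux.Gfun, Aux.wv, Aux.e1m, Aux.lam_apply, Prod.snd_sum]
    rw [hsplit]
    have hc : ∀ i : Fin (n+1), (Aux.Top n σ)^[k0+1] (fun q => Jfun n F a b i q.2)
        (x (Fin.last (n+1)), projFirst n x) =
        σ (x (Fin.last (n+1))) ^ (k0+1) * (pd1 n)^[k0+1] (Jfun n F a b i) (projFirst n x) +
        ∑ ℓ ∈ Finset.range k0, Ψ ℓ (x (Fin.last (n+1))) *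
          (pd1 n)^[ℓ+1] (Jfun n F a b i) (projFirst n x) := by
      intro i
      rw [htop i (x (Fin.last (n+1)), projFirst n x), Finset.sum_range_succ]
      simp only [hval]
      rw [add_comm]
    simp only [hc, add_smul, Finset.sum_smul, Finset.sum_add_distrib]
    rw [Finset.sum_comm (s := Finset.univ) (t := Finset.range k0)]
    rw [Finset.sum_range (fun ℓ => ∑ i : Fin (n+1),
      (Ψ ℓ (x (Fin.last (n+1))) * (pd1 n)^[ℓ+1] (Jfun n F a b i) (projFirst n x)) •
        stdVec (n+2) i.castSucc)]
end

section
/- Fix m ≥ 2, smooth functions F : ℝ^{m−1} → ℝ, a_i, b_i : ℝ → ℝ (2 ≤ i ≤ m−1), g̃ : ℝ × ℝ → ℝ, σ : ℝ → ℝ, and define A_0, A_1, L_1, …, L_{m−1} and D as in the context. Let (t,x) ∈ ℝ × ℝ^m be such that σ(x_m) ≠ 0 and D(x) ≠ 0. Then the m vectors in ℝ^m given by the space components of A_1(t,x), L_1(t,x), …, L_{m−1}(t,x) form a basis of ℝ^m. -/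
open scoped BigOperators ContDiff

/-- The determinant `D(x) = det((∂^k J_i/∂x_1^k)(x))_{1 ≤ i,k ≤ m−1}` with `m − 1 = n + 1`. -/
noncomputable def detD (n : ℕ) (F : (Fin (n + 1) → ℝ) → ℝ) (a b : Fin (n + 1) → ℝ → ℝ)
    (y : Fin (n + 1) → ℝ) : ℝ :=
  Matrix.det (Matrix.of fun i k : Fin (n + 1) =>
    (pd1 n)^[(k : ℕ) + 1] (Jfun n F a b i) y)

-- auxiliary definitions and lemmas
noncomputable def extL (n : ℕ) : (Fin (n+1) → ℝ) →L[ℝ] (Fin (n+2) → ℝ) :=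
  ContinuousLinearMap.pi (fun k => Fin.lastCases 0 (fun i => ContinuousLinearMap.proj i) k)

noncomputable def piL (n : ℕ) : (ℝ × (Fin (n+2) → ℝ)) →L[ℝ] (Fin (n+1) → ℝ) :=
  (ContinuousLinearMap.pi fun i : Fin (n+1) =>
    ContinuousLinearMap.proj (R := ℝ) (φ := fun _ : Fin (n+2) => ℝ) i.castSucc).comp
    (ContinuousLinearMap.snd ℝ ℝ (Fin (n+2) → ℝ))

noncomputable def zeL (n : ℕ) : (ℝ × (Fin (n+2) → ℝ)) →L[ℝ] ℝ :=
  (ContinuousLinearMap.proj (R := ℝ) (φ := fun _ : Fin (n+2) => ℝ) (Fin.last (n+1))).comp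
    (ContinuousLinearMap.snd ℝ ℝ (Fin (n+2) → ℝ))

noncomputable def kaL (n : ℕ) : (ℝ × (Fin (n+2) → ℝ)) →L[ℝ] ℝ × ℝ :=
  (ContinuousLinearMap.fst ℝ ℝ (Fin (n+2) → ℝ)).prod (zeL n)

def eV (n : ℕ) : Fin (n+2) → ℝ := stdVec (n+2) 0 + stdVec (n+2) (Fin.last (n+1))

noncomputable def Uf (n : ℕ) (F : (Fin (n + 1) → ℝ) → ℝ) (a b : Fin (n + 1) → ℝ → ℝ)
    (k : ℕ) (y : Fin (n+1) → ℝ) : Fin (n+1) → ℝ :=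
  fun j => (pd1 n)^[k] (Jfun n F a b j) y

-- evaluation lemmas
lemma extL_castSucc (n : ℕ) (u : Fin (n+1) → ℝ) (i : Fin (n+1)) :
    extL n u i.castSucc = u i := by
  simp [extL]

lemma extL_last (n : ℕ) (u : Fin (n+1) → ℝ) : extL n u (Fin.last (n+1)) = 0 := by
  simp [extL]

lemma eV_last (n : ℕ) : eV n (Fin.last (n+1)) = 1 := by
  simp [eV, stdVec, Pi.single_apply, (Fin.last_pos (n := n+1)).ne']

lemma eV_castSucc (n : ℕ) (i : Fin (n+1)) :
    eV n i.castSucc = if i = 0 then 1 else 0 := by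
  simp [eV, stdVec, Pi.single_apply, Fin.castSucc_eq_zero_iff,
    (Fin.castSucc_lt_last i).ne]

lemma zeL_apply (n : ℕ) (p : ℝ × (Fin (n+2) → ℝ)) : zeL n p = p.2 (Fin.last (n+1)) := rfl

lemma piL_apply (n : ℕ) (p : ℝ × (Fin (n+2) → ℝ)) : piL n p = projFirst n p.2 := rfl

lemma kaL_apply (n : ℕ) (p : ℝ × (Fin (n+2) → ℝ)) : kaL n p = (p.1, p.2 (Fin.last (n+1))) := rfl

lemma piL_dir (n : ℕ) (s : ℝ) : piL n (0, s • eV n) = s • stdVec (n+1) 0 := by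
  funext i
  simp [piL, eV_castSucc, stdVec, Pi.single_apply]

lemma zeL_dir (n : ℕ) (s : ℝ) : zeL n (0, s • eV n) = s := by
  simp [zeL, eV_last]

lemma kaL_dir (n : ℕ) (s : ℝ) : kaL n (0, s • eV n) = (0, s) := by
  simp [kaL, ContinuousLinearMap.prod_apply, zeL_dir, eV_last]

-- smoothness
lemma Jfun_smooth (n : ℕ) (F : (Fin (n + 1) → ℝ) → ℝ) (a b : Fin (n + 1) → ℝ → ℝ)
    (hF : ContDiff ℝ (⊤ : ℕ∞) F) (ha : ∀ i, ContDiff ℝ (⊤ : ℕ∞) (a i)) (hb : ∀ i, ContDiff ℝ (⊤ : ℕ∞) (b i))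
    (j : Fin (n+1)) : ContDiff ℝ ∞ (Jfun n F a b j) := by
  unfold Jfun
  by_cases hj : j = 0
  · simpa [hj] using hF.of_le (by simp)
  · simp only [hj, if_false]
    have h0 : ContDiff ℝ ∞ (fun y : Fin (n+1) → ℝ => y 0) :=
      (ContinuousLinearMap.proj (R := ℝ) (φ := fun _ : Fin (n+1) => ℝ) 0).contDiff
    have hjp : ContDiff ℝ ∞ (fun y : Fin (n+1) → ℝ => y j) :=
      (ContinuousLinearMap.proj (R := ℝ) (φ := fun _ : Fin (n+1) => ℝ) j).contDiff
    exact ((((ha j).of_le (by simp)).comp h0).neg.mul hjp).add (((hb j).of_le (by simp)).comp h0)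

lemma pd1_smooth (n : ℕ) (f : (Fin (n + 1) → ℝ) → ℝ) (hf : ContDiff ℝ ∞ f) :
    ContDiff ℝ ∞ (pd1 n f) :=
  (hf.fderiv_right (by simp)).clm_apply contDiff_const

lemma Uf_comp_smooth (n : ℕ) (F : (Fin (n + 1) → ℝ) → ℝ) (a b : Fin (n + 1) → ℝ → ℝ)
    (hF : ContDiff ℝ (⊤ : ℕ∞) F) (ha : ∀ i, ContDiff ℝ (⊤ : ℕ∞) (a i)) (hb : ∀ i, ContDiff ℝ (⊤ : ℕ∞) (b i))
    (k : ℕ) (j : Fin (n+1)) : ContDiff ℝ ∞ ((pd1 n)^[k] (Jfun n F a b j)) := by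
  induction k with
  | zero => exact Jfun_smooth n F a b hF ha hb j
  | succ k ih =>
    rw [Function.iterate_succ_apply']
    exact pd1_smooth n _ ih

lemma Uf_smooth (n : ℕ) (F : (Fin (n + 1) → ℝ) → ℝ) (a b : Fin (n + 1) → ℝ → ℝ)
    (hF : ContDiff ℝ (⊤ : ℕ∞) F) (ha : ∀ i, ContDiff ℝ (⊤ : ℕ∞) (a i)) (hb : ∀ i, ContDiff ℝ (⊤ : ℕ∞) (b i))
    (k : ℕ) : ContDiff ℝ ∞ (Uf n F a b k) :=
  contDiff_pi.mpr fun j => Uf_comp_smooth n F a b hF ha hb k j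

/-- derivative of `Uf` in the first coordinate direction raises the order. -/
lemma fderiv_Uf_e1 (n : ℕ) (F : (Fin (n + 1) → ℝ) → ℝ) (a b : Fin (n + 1) → ℝ → ℝ)
    (hF : ContDiff ℝ (⊤ : ℕ∞) F) (ha : ∀ i, ContDiff ℝ (⊤ : ℕ∞) (a i)) (hb : ∀ i, ContDiff ℝ (⊤ : ℕ∞) (b i))
    (k : ℕ) (y : Fin (n+1) → ℝ) :
    fderiv ℝ (Uf n F a b k) y (stdVec (n+1) 0) = Uf n F a b (k+1) y := by
  have hdiff : ∀ j : Fin (n+1), DifferentiableAt ℝ ((pd1 n)^[k] (Jfun n F a b j)) y :=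
    fun j => ((Uf_comp_smooth n F a b hF ha hb k j).differentiable (by simp)).differentiableAt
  funext j
  have : fderiv ℝ (Uf n F a b k) y = ContinuousLinearMap.pi
      (fun j => fderiv ℝ ((pd1 n)^[k] (Jfun n F a b j)) y) := fderiv_pi hdiff
  rw [this]
  simp only [ContinuousLinearMap.pi_apply, Uf, Function.iterate_succ_apply']
  rfl

-- coefficient functions
noncomputable def shiftc (σ : ℝ → ℝ) (c : ℕ → ℝ → ℝ) : ℕ → ℝ → ℝ
  | 0 => fun z => σ z * deriv (c 0) z
  | j+1 => fun z => σ z * deriv (c (j+1)) z + σ z * c j z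

noncomputable def shiftG (σ : ℝ → ℝ) (G : ℝ × ℝ → ℝ) : ℝ × ℝ → ℝ :=
  fun q => σ q.2 * fderiv ℝ G q (0, 1) - deriv σ q.2 * G q

noncomputable def Cf (σ : ℝ → ℝ) : ℕ → ℕ → ℝ → ℝ
  | 0 => fun j => if j = 0 then (fun _ => 1) else 0
  | k+1 => shiftc σ (Cf σ k)

noncomputable def Gf (g : ℝ → ℝ → ℝ) (σ : ℝ → ℝ) : ℕ → ℝ × ℝ → ℝ
  | 0 => Function.uncurry g
  | k+1 => shiftG σ (Gf g σ k)

lemma shiftc_smooth (σ : ℝ → ℝ) (hσ : ContDiff ℝ (⊤ : ℕ∞) σ) (c : ℕ → ℝ → ℝ)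
    (hc : ∀ j, ContDiff ℝ ∞ (c j)) (j : ℕ) : ContDiff ℝ ∞ (shiftc σ c j) := by
  have hσ' : ContDiff ℝ ∞ σ := hσ.of_le (by simp)
  cases j with
  | zero => exact hσ'.mul (contDiff_infty_iff_deriv.mp (hc 0)).2
  | succ j => exact (hσ'.mul (contDiff_infty_iff_deriv.mp (hc (j+1))).2).add (hσ'.mul (hc j))

lemma shiftG_smooth (σ : ℝ → ℝ) (hσ : ContDiff ℝ (⊤ : ℕ∞) σ) (G : ℝ × ℝ → ℝ)
    (hG : ContDiff ℝ ∞ G) : ContDiff ℝ ∞ (shiftG σ G) := by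
  have hσ' : ContDiff ℝ ∞ σ := hσ.of_le (by simp)
  have h2 : ContDiff ℝ ∞ (fun q : ℝ × ℝ => q.2) := contDiff_snd
  exact ((hσ'.comp h2).mul ((hG.fderiv_right (by simp)).clm_apply contDiff_const)).sub
    (((contDiff_infty_iff_deriv.mp hσ').2.comp h2).mul hG)

lemma Cf_smooth (σ : ℝ → ℝ) (hσ : ContDiff ℝ (⊤ : ℕ∞) σ) (k j : ℕ) : ContDiff ℝ ∞ (Cf σ k j) := by
  induction k generalizing j with
  | zero =>
    by_cases hj : j = 0 <;> simp [Cf, hj] <;> exact contDiff_const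
  | succ k ih => exact shiftc_smooth σ hσ (Cf σ k) ih j

lemma Gf_smooth (g : ℝ → ℝ → ℝ) (σ : ℝ → ℝ) (hg : ContDiff ℝ (⊤ : ℕ∞) (Function.uncurry g))
    (hσ : ContDiff ℝ (⊤ : ℕ∞) σ) (k : ℕ) : ContDiff ℝ ∞ (Gf g σ k) := by
  induction k with
  | zero => exact hg.of_le (by simp)
  | succ k ih => exact shiftG_smooth σ hσ _ ih

lemma deriv_zero_fun : deriv (0 : ℝ → ℝ) = 0 := by
  funext z
  simpa [Pi.zero_def] using deriv_const z (0 : ℝ)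

lemma Cf_eq_zero (σ : ℝ → ℝ) : ∀ k j, k < j → Cf σ k j = 0 := by
  intro k
  induction k with
  | zero => intro j hj; simp [Cf, (Nat.pos_iff_ne_zero.mp hj)]
  | succ k ih =>
    intro j hj
    match j, hj with
    | j+1, hj =>
      have h1 : Cf σ k (j+1) = 0 := ih (j+1) (by omega)
      have h2 : Cf σ k j = 0 := ih j (by omega)
      funext z
      simp [Cf, shiftc, h1, h2, deriv_zero_fun]

lemma Cf_zero_eq_zero (σ : ℝ → ℝ) : ∀ k, 1 ≤ k → Cf σ k 0 = 0 := by
  intro k hk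
  induction k with
  | zero => omega
  | succ k ih =>
    funext z
    rcases Nat.eq_zero_or_pos k with h | h
    · subst h; simp [Cf, shiftc]
    · simp [Cf, shiftc, ih h, deriv_zero_fun]

lemma Cf_diag (σ : ℝ → ℝ) (k : ℕ) : Cf σ k k = fun z => σ z ^ k := by
  induction k with
  | zero => simp [Cf]
  | succ k ih =>
    funext z
    simp [Cf, shiftc, Cf_eq_zero σ k (k+1) (by omega), ih, pow_succ, deriv_zero_fun]
    ring
-- shape of the vector fields
noncomputable def shape (n : ℕ) (F : (Fin (n + 1) → ℝ) → ℝ) (a b : Fin (n + 1) → ℝ → ℝ)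
    (g : ℝ → ℝ → ℝ) (σ : ℝ → ℝ) (k : ℕ) (p : ℝ × (Fin (n + 2) → ℝ)) : Fin (n + 2) → ℝ :=
  (∑ j ∈ Finset.range (k+1), Cf σ k j (zeL n p) • extL n (Uf n F a b j (piL n p)))
    + Gf g σ k (kaL n p) • eV n

lemma driftIV_eq_shape (n : ℕ) (F : (Fin (n + 1) → ℝ) → ℝ) (a b : Fin (n + 1) → ℝ → ℝ)
    (g : ℝ → ℝ → ℝ) (σ : ℝ → ℝ) (p : ℝ × (Fin (n + 2) → ℝ)) :
    driftIV n F a b g p = shape n F a b g σ 0 p := by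
  funext k
  refine Fin.lastCases ?_ ?_ k
  · simp [driftIV, shape, Cf, Gf, extL_last, eV_last, zeL_apply, kaL_apply, Function.uncurry]
  · intro i
    simp [driftIV, shape, Cf, Gf, extL_castSucc, eV_castSucc, zeL_apply, kaL_apply,
      Function.uncurry, Uf, piL_apply]

lemma sum_shift_algebra {V : Type*} [AddCommGroup V] [Module ℝ V] (v : ℕ → V) (A B : ℕ → ℝ)
    (N : ℕ) (hA : A (N+1) = 0) :
    ∑ j ∈ Finset.range (N+1), (A j • v j + B j • v (j+1)) =
      ∑ j ∈ Finset.range (N+2), (if j = 0 then A 0 else A j + B (j-1)) • v j := by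
  rw [Finset.sum_add_distrib]
  have h1 : ∑ j ∈ Finset.range (N+1), A j • v j = ∑ j ∈ Finset.range (N+2), A j • v j := by
    conv_rhs => rw [Finset.sum_range_succ]
    rw [hA, zero_smul, add_zero]
  rw [h1, Finset.sum_range_succ' (fun j => A j • v j) (N+1),
    Finset.sum_range_succ' (fun j => (if j = 0 then A 0 else A j + B (j-1)) • v j) (N+1)]
  simp only [Nat.succ_ne_zero, if_false, Nat.add_sub_cancel, if_pos rfl, if_true, add_smul,
    Finset.sum_add_distrib]
  abel

lemma A1f_eq (n : ℕ) (σ : ℝ → ℝ) (p : ℝ × (Fin (n + 2) → ℝ)) :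
    A1f n σ p = ((0 : ℝ), σ (zeL n p) • eV n) := rfl

lemma bracket_step (n : ℕ) (F : (Fin (n + 1) → ℝ) → ℝ) (a b : Fin (n + 1) → ℝ → ℝ)
    (g : ℝ → ℝ → ℝ) (σ : ℝ → ℝ)
    (hF : ContDiff ℝ (⊤ : ℕ∞) F) (ha : ∀ i, ContDiff ℝ (⊤ : ℕ∞) (a i)) (hb : ∀ i, ContDiff ℝ (⊤ : ℕ∞) (b i))
    (hσ : ContDiff ℝ (⊤ : ℕ∞) σ)
    (c : ℕ → ℝ → ℝ) (hc : ∀ j, ContDiff ℝ ∞ (c j)) (N : ℕ) (hN : c (N+1) = 0)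
    (G : ℝ × ℝ → ℝ) (hG : ContDiff ℝ ∞ G) (τ : ℝ)
    (X : ℝ × (Fin (n+2) → ℝ) → ℝ × (Fin (n+2) → ℝ))
    (hX : X = fun p => (τ,
      (∑ j ∈ Finset.range (N+1), c j (zeL n p) • extL n (Uf n F a b j (piL n p)))
        + G (kaL n p) • eV n))
    (p : ℝ × (Fin (n+2) → ℝ)) :
    lieBracket (A1f n σ) X p =
      (0, (∑ j ∈ Finset.range (N+2), shiftc σ c j (zeL n p) • extL n (Uf n F a b j (piL n p)))
        + shiftG σ G (kaL n p) • eV n) := by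
  subst hX
  set z := zeL n p with hz
  set y := piL n p with hy
  set s := σ z with hs
  have hσ' : ContDiff ℝ ∞ σ := hσ.of_le (by simp)
  -- derivative of each scalar coefficient
  have hscalar : ∀ j : ℕ, HasFDerivAt (fun q => c j (zeL n q))
      (((1 : ℝ →L[ℝ] ℝ).smulRight (deriv (c j) z)).comp (zeL n)) p :=
    fun j => (((hc j).differentiable (by simp) z).hasDerivAt.hasFDerivAt).comp p
      (zeL n).hasFDerivAt
  -- derivative of each vector part
  have hvec : ∀ j : ℕ, HasFDerivAt (fun q => extL n (Uf n F a b j (piL n q)))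
      ((extL n).comp ((fderiv ℝ (Uf n F a b j) y).comp (piL n))) p :=
    fun j => ((extL n).hasFDerivAt.comp p
      ((((Uf_smooth n F a b hF ha hb j).differentiable (by simp) y).hasFDerivAt).comp
        (g := Uf n F a b j) p (piL n).hasFDerivAt))
  have hsummand : ∀ j : ℕ, HasFDerivAt
      (fun q => c j (zeL n q) • extL n (Uf n F a b j (piL n q)))
      (c j z • ((extL n).comp ((fderiv ℝ (Uf n F a b j) y).comp (piL n)))
        + (((1 : ℝ →L[ℝ] ℝ).smulRight (deriv (c j) z)).comp (zeL n)).smulRight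
            (extL n (Uf n F a b j y))) p :=
    fun j => (hscalar j).smul (hvec j)
  have hGpart : HasFDerivAt (fun q => G (kaL n q) • eV n)
      (G (kaL n p) • (0 : (ℝ × (Fin (n+2) → ℝ)) →L[ℝ] (Fin (n+2) → ℝ))
        + ((fderiv ℝ G (kaL n p)).comp (kaL n)).smulRight (eV n)) p :=
    (((hG.differentiable (by simp) (kaL n p)).hasFDerivAt).comp p
      (kaL n).hasFDerivAt).smul (hasFDerivAt_const (eV n) p)
  have hW : HasFDerivAt (fun q =>
      (∑ j ∈ Finset.range (N+1), c j (zeL n q) • extL n (Uf n F a b j (piL n q)))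
        + G (kaL n q) • eV n)
      ((∑ j ∈ Finset.range (N+1),
        (c j z • ((extL n).comp ((fderiv ℝ (Uf n F a b j) y).comp (piL n)))
          + (((1 : ℝ →L[ℝ] ℝ).smulRight (deriv (c j) z)).comp (zeL n)).smulRight
              (extL n (Uf n F a b j y))))
        + (G (kaL n p) • (0 : (ℝ × (Fin (n+2) → ℝ)) →L[ℝ] (Fin (n+2) → ℝ))
        + ((fderiv ℝ G (kaL n p)).comp (kaL n)).smulRight (eV n))) p :=
    (HasFDerivAt.fun_sum (fun j _ => hsummand j)).add hGpart
  have hXd : HasFDerivAt (fun q : ℝ × (Fin (n+2) → ℝ) => (τ,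
      (∑ j ∈ Finset.range (N+1), c j (zeL n q) • extL n (Uf n F a b j (piL n q)))
        + G (kaL n q) • eV n)) ((0 : _ →L[ℝ] ℝ).prod _) p :=
    HasFDerivAt.prodMk (hasFDerivAt_const τ p) hW
  -- derivative of A1
  have hA1d : HasFDerivAt (A1f n σ)
      (((0 : (ℝ × (Fin (n+2) → ℝ)) →L[ℝ] ℝ)).prod
        (σ z • (0 : (ℝ × (Fin (n+2) → ℝ)) →L[ℝ] (Fin (n+2) → ℝ))
          + (((1 : ℝ →L[ℝ] ℝ).smulRight (deriv σ z)).comp (zeL n)).smulRight (eV n))) p := by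
    have : HasFDerivAt (fun q : ℝ × (Fin (n+2) → ℝ) => ((0:ℝ), σ (zeL n q) • eV n))
        (((0 : (ℝ × (Fin (n+2) → ℝ)) →L[ℝ] ℝ)).prod
          (σ z • (0 : (ℝ × (Fin (n+2) → ℝ)) →L[ℝ] (Fin (n+2) → ℝ))
            + (((1 : ℝ →L[ℝ] ℝ).smulRight (deriv σ z)).comp (zeL n)).smulRight (eV n))) p :=
      HasFDerivAt.prodMk (hasFDerivAt_const (0:ℝ) p)
        ((((hσ'.differentiable (by simp) z).hasDerivAt.hasFDerivAt).comp p
          (zeL n).hasFDerivAt).smul (hasFDerivAt_const (eV n) p))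
    exact this.congr_fderiv rfl
  rw [lieBracket, hXd.fderiv, hA1d.fderiv, A1f_eq n σ p]
  rw [← hz]
  simp only [ContinuousLinearMap.prod_apply, ContinuousLinearMap.add_apply,
    ContinuousLinearMap.comp_apply, ContinuousLinearMap.coe_sum', Finset.sum_apply,
    ContinuousLinearMap.smul_apply, ContinuousLinearMap.smulRight_apply,
    ContinuousLinearMap.one_apply, ContinuousLinearMap.zero_apply,
    ContinuousLinearMap.coe_smul', Pi.smul_apply, piL_dir, zeL_dir, kaL_dir,
    Prod.mk_sub_mk, smul_zero, zero_add, add_zero, sub_zero, zero_sub, smul_eq_mul]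
  have hUdir : ∀ x : ℕ, (fderiv ℝ (Uf n F a b x) y) (σ z • stdVec (n+1) 0)
      = σ z • Uf n F a b (x+1) y := by
    intro x; rw [map_smul, fderiv_Uf_e1 n F a b hF ha hb]
  have hzedir : (zeL n) (τ, ∑ j ∈ Finset.range (N+1),
      c j z • (extL n) (Uf n F a b j ((piL n) p)) + G ((kaL n) p) • eV n) = G ((kaL n) p) := by
    simp [zeL_apply, Finset.sum_apply, extL_last, eV_last, Pi.add_apply, Pi.smul_apply]
  have hGdir : (fderiv ℝ G ((kaL n) p)) (0, σ z) = σ z * (fderiv ℝ G ((kaL n) p)) (0, 1) := by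
    have h0 : ((0:ℝ), σ z) = σ z • ((0:ℝ), (1:ℝ)) := by simp
    rw [h0, map_smul, smul_eq_mul]
  rw [hzedir, hGdir]
  simp only [hUdir, map_smul, smul_smul]
  congr 1
  have hre : ∑ x ∈ Finset.range (N+1),
      ((c x z * σ z) • (extL n) (Uf n F a b (x+1) y)
        + (σ z * deriv (c x) z) • (extL n) (Uf n F a b x y)) =
      ∑ x ∈ Finset.range (N+1),
      ((σ z * deriv (c x) z) • (extL n) (Uf n F a b x y)
        + (c x z * σ z) • (extL n) (Uf n F a b (x+1) y)) :=
    Finset.sum_congr rfl (fun x _ => add_comm _ _)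
  have key := sum_shift_algebra (fun x => extL n (Uf n F a b x y))
    (fun x => σ z * deriv (c x) z) (fun x => c x z * σ z) N
    (by show σ z * deriv (c (N+1)) z = 0; rw [hN, deriv_zero_fun]; simp)
  have hsum : ∑ j ∈ Finset.range (N+2),
      (if j = 0 then σ z * deriv (c 0) z else σ z * deriv (c j) z + c (j-1) z * σ z)
        • (extL n) (Uf n F a b j y) =
      ∑ j ∈ Finset.range (N+2), shiftc σ c j z • (extL n) (Uf n F a b j y) := by
    refine Finset.sum_congr rfl (fun x _ => ?_)
    congr 1
    cases x with
    | zero => simp [shiftc]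
    | succ x => simp [shiftc]; ring
  have hGam : (σ z * (fderiv ℝ G ((kaL n) p)) (0, 1)) • eV n
      - (G ((kaL n) p) * deriv σ z) • eV n = shiftG σ G ((kaL n) p) • eV n := by
    rw [← sub_smul]
    congr 1
    simp only [shiftG, kaL_apply]
    rw [hz, zeL_apply]
    ring
  rw [hre, key, add_sub_assoc, hGam, hsum]

lemma Cf_succ_eq (σ : ℝ → ℝ) (k : ℕ) : Cf σ (k+1) = shiftc σ (Cf σ k) := rfl
lemma Gf_succ_eq (g : ℝ → ℝ → ℝ) (σ : ℝ → ℝ) (k : ℕ) :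
    Gf g σ (k+1) = shiftG σ (Gf g σ k) := rfl

lemma Lbr_eq_shape (n : ℕ) (F : (Fin (n + 1) → ℝ) → ℝ) (a b : Fin (n + 1) → ℝ → ℝ)
    (g : ℝ → ℝ → ℝ) (σ : ℝ → ℝ)
    (hF : ContDiff ℝ (⊤ : ℕ∞) F) (ha : ∀ i, ContDiff ℝ (⊤ : ℕ∞) (a i)) (hb : ∀ i, ContDiff ℝ (⊤ : ℕ∞) (b i))
    (hg : ContDiff ℝ (⊤ : ℕ∞) (Function.uncurry g)) (hσ : ContDiff ℝ (⊤ : ℕ∞) σ)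
    (k : ℕ) (p : ℝ × (Fin (n+2) → ℝ)) :
    Lbr (A1f n σ) (A0f n F a b g) k p = (0, shape n F a b g σ (k+1) p) := by
  induction k generalizing p with
  | zero =>
    have h := bracket_step n F a b g σ hF ha hb hσ (Cf σ 0) (Cf_smooth σ hσ 0) 0
      (Cf_eq_zero σ 0 1 (by omega)) (Gf g σ 0) (Gf_smooth g σ hg hσ 0) 1
      (A0f n F a b g)
      (funext fun q => by rw [A0f, driftIV_eq_shape n F a b g σ q]; rfl) p
    rw [show Lbr (A1f n σ) (A0f n F a b g) 0 = lieBracket (A1f n σ) (A0f n F a b g) from rfl, h]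
    rw [shape, Cf_succ_eq, Gf_succ_eq]
  | succ k ih =>
    have h := bracket_step n F a b g σ hF ha hb hσ (Cf σ (k+1)) (Cf_smooth σ hσ (k+1)) (k+1)
      (Cf_eq_zero σ (k+1) (k+2) (by omega)) (Gf g σ (k+1)) (Gf_smooth g σ hg hσ (k+1)) 0
      (Lbr (A1f n σ) (A0f n F a b g) k)
      (funext fun q => by rw [ih q]; rfl) p
    rw [show Lbr (A1f n σ) (A0f n F a b g) (k+1)
      = lieBracket (A1f n σ) (Lbr (A1f n σ) (A0f n F a b g) k) from rfl, h]
    simp only [shape, Cf_succ_eq, Gf_succ_eq]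

/-- If `σ(x_m) ≠ 0` and `D(x) ≠ 0`, then the space components of
`A_1(t,x), L_1(t,x), …, L_{m−1}(t,x)` form a basis of `ℝ^m` (here `m = n + 2`):
they are linearly independent and span the whole space. -/
theorem stmt_7 (n : ℕ) (F : (Fin (n + 1) → ℝ) → ℝ) (a b : Fin (n + 1) → ℝ → ℝ)
    (g : ℝ → ℝ → ℝ) (σ : ℝ → ℝ)
    (hF : ContDiff ℝ (⊤ : ℕ∞) F) (ha : ∀ i, ContDiff ℝ (⊤ : ℕ∞) (a i)) (hb : ∀ i, ContDiff ℝ (⊤ : ℕ∞) (b i))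
    (hg : ContDiff ℝ (⊤ : ℕ∞) (Function.uncurry g)) (hσ : ContDiff ℝ (⊤ : ℕ∞) σ)
    (t : ℝ) (x : Fin (n + 2) → ℝ)
    (hσx : σ (x (Fin.last (n + 1))) ≠ 0) (hD : detD n F a b (projFirst n x) ≠ 0) :
    LinearIndependent ℝ (fun j : Fin (n + 2) =>
      Fin.cases (motive := fun _ => Fin (n + 2) → ℝ)
        ((A1f n σ (t, x)).2)
        (fun j' => (Lbr (A1f n σ) (A0f n F a b g) (j' : ℕ) (t, x)).2) j) ∧
    Submodule.span ℝ (Set.range (fun j : Fin (n + 2) =>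
      Fin.cases (motive := fun _ => Fin (n + 2) → ℝ)
        ((A1f n σ (t, x)).2)
        (fun j' => (Lbr (A1f n σ) (A0f n F a b g) (j' : ℕ) (t, x)).2) j)) = ⊤ := by
  set y := projFirst n x with hy
  set z := x (Fin.last (n+1)) with hz
  -- the "upper triangular coefficient" matrix and the "building block" matrix
  set T : Matrix (Fin (n+2)) (Fin (n+2)) ℝ := Matrix.of fun i j =>
    Fin.cases (motive := fun _ => ℝ)
      (Fin.cases (motive := fun _ => ℝ) (σ z) (fun _ => 0) j)
      (fun i' => Fin.cases (motive := fun _ => ℝ)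
        (Gf g σ ((i' : ℕ)+1) (t, z)) (fun l => Cf σ ((i' : ℕ)+1) ((l : ℕ)+1) z) j) i with hT
  set B : Matrix (Fin (n+2)) (Fin (n+2)) ℝ := Matrix.of fun i k =>
    Fin.cases (motive := fun _ => ℝ)
      (eV n k) (fun l => extL n (Uf n F a b ((l : ℕ)+1) y) k) i with hB
  -- the family equals the rows of T * B
  have hfam : (fun j : Fin (n + 2) =>
      Fin.cases (motive := fun _ => Fin (n + 2) → ℝ)
        ((A1f n σ (t, x)).2)
        (fun j' => (Lbr (A1f n σ) (A0f n F a b g) (j' : ℕ) (t, x)).2) j)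
      = fun i => (T * B) i := by
    funext i
    refine Fin.cases ?_ ?_ i
    · funext k
      simp only [Fin.cases_zero, Matrix.mul_apply, Fin.sum_univ_succ, hT, hB, Matrix.of_apply,
        Fin.cases_zero, Fin.cases_succ, zero_mul, Finset.sum_const_zero, add_zero]
      show σ z * eV n k = _
      ring
    · intro i'
      funext k
      have hsh := Lbr_eq_shape n F a b g σ hF ha hb hg hσ (i' : ℕ) (t, x)
      simp only [Fin.cases_succ, hsh]
      show shape n F a b g σ ((i' : ℕ)+1) (t, x) k = _
      have hze : zeL n (t, x) = z := rfl
      have hpi : piL n (t, x) = y := rfl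
      have hka : kaL n (t, x) = (t, z) := rfl
      simp only [shape, hze, hpi, hka, Pi.add_apply, Pi.smul_apply, Finset.sum_apply,
        smul_eq_mul]
      rw [Finset.sum_range_succ' (fun j => Cf σ ((i':ℕ)+1) j z * extL n (Uf n F a b j y) k)
        ((i' : ℕ)+1)]
      rw [Cf_zero_eq_zero σ ((i':ℕ)+1) (by omega)]
      simp only [Pi.zero_apply, zero_mul, add_zero]
      rw [Matrix.mul_apply, Fin.sum_univ_succ]
      simp only [hT, hB, Matrix.of_apply, Fin.cases_zero, Fin.cases_succ]
      rw [Fin.sum_univ_eq_sum_range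
        (fun l => Cf σ ((i':ℕ)+1) (l+1) z * extL n (Uf n F a b (l+1) y) k) (n+1)]
      rw [← Finset.sum_subset (Finset.range_subset_range.mpr
        (by omega : (i' : ℕ) + 1 ≤ n + 1))
        (fun l _ hl => by
          rw [Cf_eq_zero σ ((i':ℕ)+1) (l+1) (by simp at hl; omega)]
          simp)]
      ring
  -- determinant of T
  have hdetT : T.det ≠ 0 := by
    rw [Matrix.det_of_lowerTriangular T (by
      intro i j hij
      replace hij : i < j := hij
      rcases Fin.eq_zero_or_eq_succ j with rfl | ⟨l, rfl⟩
      · exact absurd hij (by simp)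
      · rcases Fin.eq_zero_or_eq_succ i with rfl | ⟨i', rfl⟩
        · simp [hT]
        · simp only [hT, Matrix.of_apply, Fin.cases_succ]
          rw [Cf_eq_zero σ ((i':ℕ)+1) ((l:ℕ)+1)
            (by have h2 := Fin.lt_def.mp hij
                simp only [Fin.val_succ] at h2
                omega)]
          rfl)]
    rw [Fin.prod_univ_succ]
    simp only [hT, Matrix.of_apply, Fin.cases_zero, Fin.cases_succ]
    refine mul_ne_zero hσx (Finset.prod_ne_zero_iff.mpr fun i' _ => ?_)
    rw [Cf_diag]
    exact pow_ne_zero _ hσx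
  -- determinant of B
  have hdetB : B.det ≠ 0 := by
    rw [Matrix.det_succ_column B (Fin.last (n+1))]
    rw [Finset.sum_eq_single 0 (fun i _ hi => by
        rcases Fin.eq_zero_or_eq_succ i with h | ⟨l, rfl⟩
        · exact absurd h hi
        · simp [hB, extL_last])
      (fun h => absurd (Finset.mem_univ _) h)]
    have hB0 : B 0 (Fin.last (n+1)) = 1 := by simp [hB, eV_last]
    rw [hB0]
    have hsub : B.submatrix (Fin.succAbove 0) (Fin.last (n+1)).succAbove
        = Matrix.transpose (Matrix.of fun i k : Fin (n + 1) =>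
            (pd1 n)^[(k : ℕ) + 1] (Jfun n F a b i) y) := by
      ext r c
      simp only [Matrix.submatrix_apply, Fin.zero_succAbove, Fin.succAbove_last,
        Matrix.transpose_apply, Matrix.of_apply, hB, Fin.cases_succ]
      rw [extL_castSucc]
      rfl
    rw [hsub, Matrix.det_transpose]
    refine mul_ne_zero (mul_ne_zero (pow_ne_zero _ (by norm_num : (-1:ℝ) ≠ 0)) one_ne_zero) hD
  -- conclude
  have hunit : IsUnit (T * B) := by
    rw [Matrix.isUnit_iff_isUnit_det, Matrix.det_mul, isUnit_iff_ne_zero]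
    exact mul_ne_zero hdetT hdetB
  have hli : LinearIndependent ℝ (fun i => (T * B) i) :=
    Matrix.linearIndependent_rows_iff_isUnit.mpr hunit
  rw [hfam]
  refine ⟨hli, hli.span_eq_top_of_card_eq_finrank ?_⟩
  simp [Module.finrank_fintype_fun_eq_card]
end

section
/- (Lie-algebraic content of Theorem 4.1.) Fix m ≥ 2, smooth functions F : ℝ^{m−1} → ℝ, a_i, b_i : ℝ → ℝ (2 ≤ i ≤ m−1), g̃ : ℝ × ℝ → ℝ, σ : ℝ → ℝ, and define A_0, A_1, Λ(t,y) and D as in the context. Let U ⊆ ℝ be an open interval on which σ is strictly positive, and let x = (x_1, …, x_m) ∈ ℝ × (0,1)^{m−2} × U satisfy D(x) ≠ 0. Then there exists ε > 0 such that for every t ∈ ℝ and every y ∈ ℝ^m with ‖y − x‖ < ε, the subspace Λ(t,y) of ℝ^{1+m} has dimension m + 1 (i.e. the weak Hörmander bracket-spanning condition holds in a space neighborhood of x, uniformly in time). -/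
open scoped BigOperators

section Helpers

variable {E F : Type*} [NormedAddCommGroup E] [NormedSpace ℝ E]
  [NormedAddCommGroup F] [NormedSpace ℝ F]

lemma contDiff_deriv' {f : ℝ → ℝ} (hf : ContDiff ℝ (⊤ : ℕ∞) f) : ContDiff ℝ (⊤ : ℕ∞) (deriv f) := by
  have h : deriv f = fun x => fderiv ℝ f x 1 := by
    funext x; rw [fderiv_apply_one_eq_deriv]
  rw [h]
  exact (hf.fderiv_right (by simp)).clm_apply contDiff_const

lemma hasDerivAt_line {f : E → F} {p : E} (hf : DifferentiableAt ℝ f p) (w : E) :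
    HasDerivAt (fun r : ℝ => f (p + r • w)) (fderiv ℝ f p w) 0 := by
  have h1 : HasDerivAt (fun r : ℝ => p + r • w) w 0 := by
    simpa using ((hasDerivAt_id (0:ℝ)).smul_const w).const_add p
  exact hf.hasFDerivAt.comp_hasDerivAt_of_eq 0 h1 (by simp)

lemma fderiv_line {f : E → F} {p : E} (hf : DifferentiableAt ℝ f p) (w : E) :
    fderiv ℝ f p w = deriv (fun r : ℝ => f (p + r • w)) 0 :=
  (hasDerivAt_line hf w).deriv.symm

lemma hasDerivAt_comp_affine {φ : ℝ → ℝ} {u d : ℝ} (hφ : HasDerivAt φ d u) (s : ℝ) :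
    HasDerivAt (fun r : ℝ => φ (u + r * s)) (s * d) 0 := by
  have h1 : HasDerivAt (fun r : ℝ => u + r * s) s 0 := by
    simpa using ((hasDerivAt_id (0:ℝ)).mul_const s).const_add u
  have h2 : HasDerivAt φ d (u + 0 * s) := by simpa using hφ
  simpa [Function.comp_def, mul_comm] using h2.comp 0 h1

end Helpers

noncomputable def pdt2 (c : ℝ → ℝ → ℝ) : ℝ → ℝ → ℝ :=
  fun t u => fderiv ℝ (Function.uncurry c) (t, u) (0, 1)

lemma contDiff_pdt2 {c : ℝ → ℝ → ℝ} (hc : ContDiff ℝ (⊤ : ℕ∞) (Function.uncurry c)) :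
    ContDiff ℝ (⊤ : ℕ∞) (Function.uncurry (pdt2 c)) := by
  have h : Function.uncurry (pdt2 c)
      = fun q : ℝ × ℝ => fderiv ℝ (Function.uncurry c) q ((0:ℝ), (1:ℝ)) := by
    funext q; simp [pdt2, Function.uncurry]
  rw [h]
  exact (hc.fderiv_right (by simp)).clm_apply contDiff_const

lemma hasDerivAt_pdt2 {c : ℝ → ℝ → ℝ} (hc : ContDiff ℝ (⊤ : ℕ∞) (Function.uncurry c)) (t u : ℝ) :
    HasDerivAt (fun v => c t v) (pdt2 c t u) u := by
  have h1 : HasDerivAt (fun v : ℝ => (t, v)) ((0:ℝ), (1:ℝ)) u :=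
    (hasDerivAt_const u t).prodMk (hasDerivAt_id u)
  exact ((hc.differentiable (by simp) (t, u)).hasFDerivAt).comp_hasDerivAt u h1

noncomputable section BracketSetup

variable (n : ℕ)

/-- `e_1 + e_m`. -/
def Evec : Fin (n + 2) → ℝ := stdVec (n + 2) 0 + stdVec (n + 2) (Fin.last (n + 1))

variable (F : (Fin (n + 1) → ℝ) → ℝ) (a b : Fin (n + 1) → ℝ → ℝ)

/-- `(∂_1^{k+1} J_i)_i`, extended by `0` in the last coordinate. -/
def Pe (k : ℕ) (x : Fin (n + 2) → ℝ) : Fin (n + 2) → ℝ :=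
  fun i => Fin.lastCases (motive := fun _ => ℝ) 0
    (fun i' => (pd1 n)^[k + 1] (Jfun n F a b i') (projFirst n x)) i

lemma Evec_last : Evec n (Fin.last (n + 1)) = 1 := by
  have h : (Fin.last (n + 1)) ≠ (0 : Fin (n + 2)) := by
    simp [Fin.ext_iff]
  simp [Evec, stdVec, Pi.single_apply, h]

lemma Evec_castSucc (i : Fin (n + 1)) :
    Evec n (Fin.castSucc i) = if i = 0 then 1 else 0 := by
  have h : Fin.castSucc i ≠ Fin.last (n + 1) := (Fin.castSucc_lt_last i).ne
  simp [Evec, stdVec, Pi.single_apply, h, Fin.castSucc_eq_zero_iff]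

lemma Pe_last (k : ℕ) (x : Fin (n + 2) → ℝ) : Pe n F a b k x (Fin.last (n + 1)) = 0 := by
  simp [Pe]

lemma Pe_castSucc (k : ℕ) (x : Fin (n + 2) → ℝ) (i : Fin (n + 1)) :
    Pe n F a b k x (Fin.castSucc i) = (pd1 n)^[k + 1] (Jfun n F a b i) (projFirst n x) := by
  simp [Pe]

lemma projFirst_line (x w : Fin (n + 2) → ℝ) (r : ℝ) :
    projFirst n (x + r • w) = projFirst n x + r • projFirst n w := rfl

lemma projFirst_Evec : projFirst n (Evec n) = stdVec (n + 1) 0 := by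
  funext i
  simp only [projFirst]
  rw [Evec_castSucc]
  simp [stdVec, Pi.single_apply]

lemma driftIV_last (g : ℝ → ℝ → ℝ) (p : ℝ × (Fin (n + 2) → ℝ)) :
    driftIV n F a b g p (Fin.last (n + 1)) = g p.1 (p.2 (Fin.last (n + 1))) := by
  simp [driftIV]

lemma driftIV_castSucc (g : ℝ → ℝ → ℝ) (p : ℝ × (Fin (n + 2) → ℝ)) (j : Fin (n + 1)) :
    driftIV n F a b g p (Fin.castSucc j)
      = Jfun n F a b j (projFirst n p.2)
        + if j = 0 then g p.1 (p.2 (Fin.last (n + 1))) else 0 := by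
  simp [driftIV]

lemma contDiff_Jfun (hF : ContDiff ℝ (⊤ : ℕ∞) F) (ha : ∀ i, ContDiff ℝ (⊤ : ℕ∞) (a i))
    (hb : ∀ i, ContDiff ℝ (⊤ : ℕ∞) (b i)) (i : Fin (n + 1)) :
    ContDiff ℝ (⊤ : ℕ∞) (Jfun n F a b i) := by
  by_cases h : i = 0
  · have : Jfun n F a b i = F := by funext y; simp [Jfun, h]
    rw [this]; exact hF
  · have : Jfun n F a b i = fun y => -(a i (y 0)) * y i + b i (y 0) := by
      funext y; simp [Jfun, h]
    rw [this]
    have h0 : ContDiff ℝ (⊤ : ℕ∞) (fun y : Fin (n + 1) → ℝ => y 0) :=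
      (ContinuousLinearMap.proj (R := ℝ) (φ := fun _ : Fin (n + 1) => ℝ) 0).contDiff
    have hi : ContDiff ℝ (⊤ : ℕ∞) (fun y : Fin (n + 1) → ℝ => y i) :=
      (ContinuousLinearMap.proj (R := ℝ) (φ := fun _ : Fin (n + 1) => ℝ) i).contDiff
    exact ((((ha i).comp h0).neg.mul hi)).add ((hb i).comp h0)

lemma contDiff_pd1 {f : (Fin (n + 1) → ℝ) → ℝ} (hf : ContDiff ℝ (⊤ : ℕ∞) f) :
    ContDiff ℝ (⊤ : ℕ∞) (pd1 n f) :=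
  (hf.fderiv_right (by simp)).clm_apply contDiff_const

lemma contDiff_pd1_iter {f : (Fin (n + 1) → ℝ) → ℝ} (hf : ContDiff ℝ (⊤ : ℕ∞) f) (k : ℕ) :
    ContDiff ℝ (⊤ : ℕ∞) ((pd1 n)^[k] f) := by
  induction k with
  | zero => exact hf
  | succ k ih =>
    rw [Function.iterate_succ_apply']
    exact contDiff_pd1 n ih

lemma contDiff_projFirst : ContDiff ℝ (⊤ : ℕ∞) (projFirst n) :=
  contDiff_pi.mpr fun i =>
    (ContinuousLinearMap.proj (R := ℝ) (φ := fun _ : Fin (n + 2) => ℝ) i.castSucc).contDiff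

lemma contDiff_Pe (hF : ContDiff ℝ (⊤ : ℕ∞) F) (ha : ∀ i, ContDiff ℝ (⊤ : ℕ∞) (a i))
    (hb : ∀ i, ContDiff ℝ (⊤ : ℕ∞) (b i)) (k : ℕ) :
    ContDiff ℝ (⊤ : ℕ∞) (Pe n F a b k) := by
  refine contDiff_pi.mpr fun i => ?_
  induction i using Fin.lastCases with
  | last => simp only [Pe_last]; exact contDiff_const
  | cast i =>
    simp only [Pe_castSucc]
    exact (contDiff_pd1_iter n (contDiff_Jfun n F a b hF ha hb i) (k + 1)).comp
      (contDiff_projFirst n)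

lemma contDiff_lastc : ContDiff ℝ (⊤ : ℕ∞) (fun p : ℝ × (Fin (n + 2) → ℝ) => p.2 (Fin.last (n + 1))) :=
  ((ContinuousLinearMap.proj (R := ℝ) (φ := fun _ : Fin (n + 2) => ℝ)
    (Fin.last (n + 1))).contDiff).comp contDiff_snd

lemma contDiff_driftIV (g : ℝ → ℝ → ℝ) (hF : ContDiff ℝ (⊤ : ℕ∞) F) (ha : ∀ i, ContDiff ℝ (⊤ : ℕ∞) (a i))
    (hb : ∀ i, ContDiff ℝ (⊤ : ℕ∞) (b i)) (hg : ContDiff ℝ (⊤ : ℕ∞) (Function.uncurry g)) :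
    ContDiff ℝ (⊤ : ℕ∞) (driftIV n F a b g) := by
  have hgc : ContDiff ℝ (⊤ : ℕ∞) (fun p : ℝ × (Fin (n + 2) → ℝ) => g p.1 (p.2 (Fin.last (n + 1)))) :=
    hg.comp (contDiff_fst.prodMk (contDiff_lastc n))
  refine contDiff_pi.mpr fun i => ?_
  induction i using Fin.lastCases with
  | last => simp only [driftIV_last]; exact hgc
  | cast j =>
    simp only [driftIV_castSucc]
    refine ContDiff.add ?_ ?_
    · exact (contDiff_Jfun n F a b hF ha hb j).comp
        ((contDiff_projFirst n).comp contDiff_snd)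
    · by_cases h : j = 0
      · simpa [h] using hgc
      · simpa [h] using (contDiff_const (c := (0:ℝ)))

lemma contDiff_A0f (g : ℝ → ℝ → ℝ) (hF : ContDiff ℝ (⊤ : ℕ∞) F) (ha : ∀ i, ContDiff ℝ (⊤ : ℕ∞) (a i))
    (hb : ∀ i, ContDiff ℝ (⊤ : ℕ∞) (b i)) (hg : ContDiff ℝ (⊤ : ℕ∞) (Function.uncurry g)) :
    ContDiff ℝ (⊤ : ℕ∞) (A0f n F a b g) :=
  contDiff_const.prodMk (contDiff_driftIV n F a b g hF ha hb hg)

lemma contDiff_A1f (σ : ℝ → ℝ) (hσ : ContDiff ℝ (⊤ : ℕ∞) σ) : ContDiff ℝ (⊤ : ℕ∞) (A1f n σ) :=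
  contDiff_const.prodMk ((hσ.comp (contDiff_lastc n)).smul contDiff_const)

end BracketSetup

noncomputable section GoodSection

variable (n : ℕ) (F : (Fin (n + 1) → ℝ) → ℝ) (a b : Fin (n + 1) → ℝ → ℝ)

/-- The canonical shape of all the iterated brackets `[A1,[A1,…[A1,A0]…]]`. -/
def GoodShape (k : ℕ) (γ : ℕ → ℝ → ℝ) (c : ℝ → ℝ → ℝ)
    (p : ℝ × (Fin (n + 2) → ℝ)) : ℝ × (Fin (n + 2) → ℝ) :=
  ((0:ℝ), (∑ j ∈ Finset.range (k + 1), γ j (p.2 (Fin.last (n + 1))) • Pe n F a b j p.2)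
    + c p.1 (p.2 (Fin.last (n + 1))) • Evec n)

lemma contDiff_GoodShape (k : ℕ) {γ : ℕ → ℝ → ℝ} {c : ℝ → ℝ → ℝ}
    (hγ : ∀ j, ContDiff ℝ (⊤ : ℕ∞) (γ j)) (hc : ContDiff ℝ (⊤ : ℕ∞) (Function.uncurry c))
    (hF : ContDiff ℝ (⊤ : ℕ∞) F) (ha : ∀ i, ContDiff ℝ (⊤ : ℕ∞) (a i)) (hb : ∀ i, ContDiff ℝ (⊤ : ℕ∞) (b i)) :
    ContDiff ℝ (⊤ : ℕ∞) (GoodShape n F a b k γ c) := by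
  refine contDiff_const.prodMk (ContDiff.add ?_ ?_)
  · exact ContDiff.sum fun j _ =>
      (((hγ j).comp (contDiff_lastc n))).smul ((contDiff_Pe n F a b hF ha hb j).comp contDiff_snd)
  · exact (hc.comp (contDiff_fst.prodMk (contDiff_lastc n))).smul contDiff_const

lemma GoodShape_snd_last (k : ℕ) (γ : ℕ → ℝ → ℝ) (c : ℝ → ℝ → ℝ)
    (p : ℝ × (Fin (n + 2) → ℝ)) :
    (GoodShape n F a b k γ c p).2 (Fin.last (n + 1))
      = c p.1 (p.2 (Fin.last (n + 1))) := by
  simp [GoodShape, Finset.sum_apply, Pe_last, Evec_last]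

/-- directional derivative of `A1f` in an arbitrary direction. -/
lemma fderiv_A1f (σ : ℝ → ℝ) (hσ : ContDiff ℝ (⊤ : ℕ∞) σ) (t τ : ℝ) (y w : Fin (n + 2) → ℝ) :
    fderiv ℝ (A1f n σ) (t, y) (τ, w)
      = (0, (w (Fin.last (n + 1)) * deriv σ (y (Fin.last (n + 1)))) • Evec n) := by
  have hdiff : DifferentiableAt ℝ (A1f n σ) (t, y) :=
    (contDiff_A1f n σ hσ).differentiable (by simp) _
  rw [fderiv_line hdiff]
  have hcurve : (fun r : ℝ => A1f n σ ((t, y) + r • (τ, w)))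
      = fun r : ℝ => ((0:ℝ),
          σ (y (Fin.last (n + 1)) + r * w (Fin.last (n + 1))) • Evec n) := by
    funext r
    simp [A1f, Prod.smul_mk, Prod.mk_add_mk, Evec, smul_eq_mul]
  rw [hcurve]
  have H : HasDerivAt (fun r : ℝ => ((0:ℝ),
      σ (y (Fin.last (n + 1)) + r * w (Fin.last (n + 1))) • Evec n))
      ((0:ℝ), (w (Fin.last (n + 1)) * deriv σ (y (Fin.last (n + 1)))) • Evec n) 0 := by
    refine (hasDerivAt_const (0:ℝ) (0:ℝ)).prodMk ?_
    exact (hasDerivAt_comp_affine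
      ((hσ.differentiable (by simp) _).hasDerivAt) _).smul_const (Evec n)
  exact H.deriv

end GoodSection

noncomputable section DerivComput

variable (n : ℕ) (F : (Fin (n + 1) → ℝ) → ℝ) (a b : Fin (n + 1) → ℝ → ℝ)

lemma fderiv_pd1_iter {f : (Fin (n + 1) → ℝ) → ℝ} (hf : ContDiff ℝ (⊤ : ℕ∞) f) (k : ℕ)
    (z : Fin (n + 1) → ℝ) (s : ℝ) :
    fderiv ℝ ((pd1 n)^[k] f) z (s • stdVec (n + 1) 0) = s * (pd1 n)^[k + 1] f z := by
  rw [map_smul, Function.iterate_succ_apply']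
  simp [pd1, smul_eq_mul]

lemma fderiv_A0f (g : ℝ → ℝ → ℝ) (hF : ContDiff ℝ (⊤ : ℕ∞) F) (ha : ∀ i, ContDiff ℝ (⊤ : ℕ∞) (a i))
    (hb : ∀ i, ContDiff ℝ (⊤ : ℕ∞) (b i)) (hg : ContDiff ℝ (⊤ : ℕ∞) (Function.uncurry g))
    (t : ℝ) (y : Fin (n + 2) → ℝ) (s : ℝ) :
    fderiv ℝ (A0f n F a b g) (t, y) ((0:ℝ), s • Evec n)
      = (0, s • Pe n F a b 0 y
          + (s * pdt2 g t (y (Fin.last (n + 1)))) • Evec n) := by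
  have hdiff : DifferentiableAt ℝ (A0f n F a b g) (t, y) :=
    (contDiff_A0f n F a b g hF ha hb hg).differentiable (by simp) _
  rw [fderiv_line hdiff]
  have hcurve : (fun r : ℝ => A0f n F a b g ((t, y) + r • ((0:ℝ), s • Evec n)))
      = fun r : ℝ => ((1:ℝ), driftIV n F a b g (t, y + r • (s • Evec n))) := by
    funext r
    simp [A0f, Prod.smul_mk, Prod.mk_add_mk]
  rw [hcurve]
  refine HasDerivAt.deriv ?_
  refine (hasDerivAt_const (0:ℝ) (1:ℝ)).prodMk (hasDerivAt_pi.mpr fun i => ?_)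
  induction i using Fin.lastCases with
  | last =>
    have hfun : (fun r : ℝ => driftIV n F a b g (t, y + r • (s • Evec n)) (Fin.last (n + 1)))
        = fun r : ℝ => g t (y (Fin.last (n + 1)) + r * s) := by
      funext r
      rw [driftIV_last]
      simp [Evec_last, smul_eq_mul, mul_comm]
    have hval : (s • Pe n F a b 0 y + (s * pdt2 g t (y (Fin.last (n + 1)))) • Evec n)
        (Fin.last (n + 1)) = s * pdt2 g t (y (Fin.last (n + 1))) := by
      simp [Pe_last, Evec_last]
    rw [hfun, hval]
    exact hasDerivAt_comp_affine (hasDerivAt_pdt2 hg t _) s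
  | cast j =>
    have hfun : (fun r : ℝ => driftIV n F a b g (t, y + r • (s • Evec n)) (Fin.castSucc j))
        = fun r : ℝ => Jfun n F a b j (projFirst n y + r • (s • stdVec (n + 1) 0))
            + if j = 0 then g t (y (Fin.last (n + 1)) + r * s) else 0 := by
      funext r
      rw [driftIV_castSucc]
      have h1 : projFirst n (y + r • (s • Evec n))
          = projFirst n y + r • (s • stdVec (n + 1) 0) := by
        rw [projFirst_line]
        congr 1
        funext i'
        simp [projFirst, Evec_castSucc, stdVec, Pi.single_apply]
      rw [h1]
      simp [Evec_last, smul_eq_mul, mul_comm]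
    have hJd : HasDerivAt
        (fun r : ℝ => Jfun n F a b j (projFirst n y + r • (s • stdVec (n + 1) 0)))
        (s * (pd1 n)^[0 + 1] (Jfun n F a b j) (projFirst n y)) 0 := by
      have h := hasDerivAt_line
        (((contDiff_Jfun n F a b hF ha hb j).differentiable (by simp)) (projFirst n y))
        (s • stdVec (n + 1) 0)
      have h2 := fderiv_pd1_iter n (contDiff_Jfun n F a b hF ha hb j) 0 (projFirst n y) s
      simp only [Function.iterate_zero, id_eq] at h2
      rwa [h2] at h
    have hval : (s • Pe n F a b 0 y + (s * pdt2 g t (y (Fin.last (n + 1)))) • Evec n)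
        (Fin.castSucc j)
        = s * (pd1 n)^[0 + 1] (Jfun n F a b j) (projFirst n y)
          + if j = 0 then s * pdt2 g t (y (Fin.last (n + 1))) else 0 := by
      simp only [Pi.add_apply, Pi.smul_apply, smul_eq_mul, Pe_castSucc, Evec_castSucc]
      by_cases h : j = 0 <;> simp [h]
    rw [hfun, hval]
    by_cases h : j = 0
    · simp only [if_pos h]
      exact hJd.add (hasDerivAt_comp_affine (hasDerivAt_pdt2 hg t _) s)
    · simp only [if_neg h]
      simpa using hJd.fun_add (hasDerivAt_const (0:ℝ) (0:ℝ))

lemma fderiv_GoodShape (k : ℕ) {γ : ℕ → ℝ → ℝ} {c : ℝ → ℝ → ℝ}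
    (hγ : ∀ j, ContDiff ℝ (⊤ : ℕ∞) (γ j)) (hc : ContDiff ℝ (⊤ : ℕ∞) (Function.uncurry c))
    (hF : ContDiff ℝ (⊤ : ℕ∞) F) (ha : ∀ i, ContDiff ℝ (⊤ : ℕ∞) (a i)) (hb : ∀ i, ContDiff ℝ (⊤ : ℕ∞) (b i))
    (t : ℝ) (y : Fin (n + 2) → ℝ) (s : ℝ) :
    fderiv ℝ (GoodShape n F a b k γ c) (t, y) ((0:ℝ), s • Evec n)
      = (0, (∑ j ∈ Finset.range (k + 1),
            ((s * deriv (γ j) (y (Fin.last (n + 1)))) • Pe n F a b j y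
              + (s * γ j (y (Fin.last (n + 1)))) • Pe n F a b (j + 1) y))
          + (s * pdt2 c t (y (Fin.last (n + 1)))) • Evec n) := by
  have hdiff : DifferentiableAt ℝ (GoodShape n F a b k γ c) (t, y) :=
    (contDiff_GoodShape n F a b k hγ hc hF ha hb).differentiable (by simp) _
  rw [fderiv_line hdiff]
  set u := y (Fin.last (n + 1)) with hu
  set z := projFirst n y with hz
  have hcurve : (fun r : ℝ => GoodShape n F a b k γ c ((t, y) + r • ((0:ℝ), s • Evec n)))
      = fun r : ℝ => ((0:ℝ),
          (∑ j ∈ Finset.range (k + 1), γ j (u + r * s) • Pe n F a b j (y + r • (s • Evec n)))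
            + c t (u + r * s) • Evec n) := by
    funext r
    simp [GoodShape, Prod.smul_mk, Prod.mk_add_mk, Evec_last, smul_eq_mul, mul_comm, hu]
  rw [hcurve]
  refine HasDerivAt.deriv ?_
  refine (hasDerivAt_const (0:ℝ) (0:ℝ)).prodMk (hasDerivAt_pi.mpr fun i => ?_)
  have hproj : ∀ r : ℝ, projFirst n (y + r • (s • Evec n)) = z + r • (s • stdVec (n + 1) 0) := by
    intro r
    rw [projFirst_line, hz]
    have h2 : projFirst n (s • Evec n) = s • projFirst n (Evec n) := rfl
    rw [h2, projFirst_Evec]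
  induction i using Fin.lastCases with
  | last =>
    have hfun : (fun r : ℝ =>
        ((∑ j ∈ Finset.range (k + 1), γ j (u + r * s) • Pe n F a b j (y + r • (s • Evec n)))
          + c t (u + r * s) • Evec n) (Fin.last (n + 1)))
        = fun r : ℝ => c t (u + r * s) := by
      funext r
      simp [Finset.sum_apply, Pe_last, Evec_last]
    have hval : ((∑ j ∈ Finset.range (k + 1),
          ((s * deriv (γ j) u) • Pe n F a b j y + (s * γ j u) • Pe n F a b (j + 1) y))
        + (s * pdt2 c t u) • Evec n) (Fin.last (n + 1)) = s * pdt2 c t u := by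
      simp [Finset.sum_apply, Pe_last, Evec_last]
    rw [hfun, hval]
    exact hasDerivAt_comp_affine (hasDerivAt_pdt2 hc t u) s
  | cast i' =>
    have hfun : (fun r : ℝ =>
        ((∑ j ∈ Finset.range (k + 1), γ j (u + r * s) • Pe n F a b j (y + r • (s • Evec n)))
          + c t (u + r * s) • Evec n) (Fin.castSucc i'))
        = fun r : ℝ =>
          (∑ j ∈ Finset.range (k + 1),
            γ j (u + r * s) * (pd1 n)^[j + 1] (Jfun n F a b i') (z + r • (s • stdVec (n + 1) 0)))
          + c t (u + r * s) * Evec n (Fin.castSucc i') := by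
      funext r
      simp [Finset.sum_apply, Pe_castSucc, hproj r]
    have Hsum : HasDerivAt (fun r : ℝ =>
        (∑ j ∈ Finset.range (k + 1),
          γ j (u + r * s) * (pd1 n)^[j + 1] (Jfun n F a b i') (z + r • (s • stdVec (n + 1) 0))))
        (∑ j ∈ Finset.range (k + 1),
          (s * deriv (γ j) u * ((pd1 n)^[j + 1] (Jfun n F a b i') z)
            + γ j u * (s * (pd1 n)^[j + 1 + 1] (Jfun n F a b i') z))) 0 := by
      refine HasDerivAt.fun_sum fun j _ => ?_
      have h1 : HasDerivAt (fun r : ℝ => γ j (u + r * s)) (s * deriv (γ j) u) 0 :=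
        hasDerivAt_comp_affine (((hγ j).differentiable (by simp)) u).hasDerivAt s
      have h2 : HasDerivAt (fun r : ℝ =>
          (pd1 n)^[j + 1] (Jfun n F a b i') (z + r • (s • stdVec (n + 1) 0)))
          (s * (pd1 n)^[j + 1 + 1] (Jfun n F a b i') z) 0 := by
        have h := hasDerivAt_line
          (((contDiff_pd1_iter n (contDiff_Jfun n F a b hF ha hb i') (j + 1)).differentiable
            (by simp)) z) (s • stdVec (n + 1) 0)
        rwa [fderiv_pd1_iter n (contDiff_Jfun n F a b hF ha hb i') (j + 1) z s] at h
      simpa using h1.fun_mul h2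
    have Hc : HasDerivAt (fun r : ℝ => c t (u + r * s) * Evec n (Fin.castSucc i'))
        ((s * pdt2 c t u) * Evec n (Fin.castSucc i')) 0 :=
      (hasDerivAt_comp_affine (hasDerivAt_pdt2 hc t u) s).mul_const _
    have hval : ((∑ j ∈ Finset.range (k + 1),
          ((s * deriv (γ j) u) • Pe n F a b j y + (s * γ j u) • Pe n F a b (j + 1) y))
        + (s * pdt2 c t u) • Evec n) (Fin.castSucc i')
        = (∑ j ∈ Finset.range (k + 1),
            (s * deriv (γ j) u * ((pd1 n)^[j + 1] (Jfun n F a b i') z)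
              + γ j u * (s * (pd1 n)^[j + 1 + 1] (Jfun n F a b i') z)))
          + (s * pdt2 c t u) * Evec n (Fin.castSucc i') := by
      simp only [Finset.sum_apply, Pi.add_apply, Pi.smul_apply, smul_eq_mul, Pe_castSucc, ← hz]
      congr 1
      exact Finset.sum_congr rfl fun j _ => by ring
    rw [hfun, hval]
    exact Hsum.add Hc

end DerivComput

noncomputable section GoodInduction

variable (n : ℕ) (F : (Fin (n + 1) → ℝ) → ℝ) (a b : Fin (n + 1) → ℝ → ℝ)

/-- Invariant shape of the iterated brackets. -/
def Good (σ : ℝ → ℝ) (k : ℕ)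
    (V : ℝ × (Fin (n + 2) → ℝ) → ℝ × (Fin (n + 2) → ℝ)) : Prop :=
  ∃ γ : ℕ → ℝ → ℝ, ∃ c : ℝ → ℝ → ℝ,
    (∀ j, ContDiff ℝ (⊤ : ℕ∞) (γ j)) ∧ ContDiff ℝ (⊤ : ℕ∞) (Function.uncurry c) ∧
    (γ k = fun u => σ u ^ (k + 1)) ∧ V = GoodShape n F a b k γ c

lemma sum_shift (k : ℕ) (γ : ℕ → ℝ → ℝ) (σ : ℝ → ℝ) (u : ℝ) (y : Fin (n + 2) → ℝ) :
    (∑ j ∈ Finset.range (k + 2),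
      ((if j ≤ k then σ u * deriv (γ j) u else 0)
        + (if j = 0 then 0 else σ u * γ (j - 1) u)) • Pe n F a b j y)
    = ∑ j ∈ Finset.range (k + 1),
        ((σ u * deriv (γ j) u) • Pe n F a b j y
          + (σ u * γ j u) • Pe n F a b (j + 1) y) := by
  simp only [add_smul]
  rw [Finset.sum_add_distrib]
  have hA : (∑ j ∈ Finset.range (k + 2),
      (if j ≤ k then σ u * deriv (γ j) u else 0) • Pe n F a b j y)
      = ∑ j ∈ Finset.range (k + 1), (σ u * deriv (γ j) u) • Pe n F a b j y := by
    rw [Finset.sum_range_succ, if_neg (by omega), zero_smul, add_zero]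
    exact Finset.sum_congr rfl fun j hj => by
      rw [if_pos (Nat.lt_succ_iff.mp (Finset.mem_range.mp hj))]
  have hB : (∑ j ∈ Finset.range (k + 2),
      (if j = 0 then 0 else σ u * γ (j - 1) u) • Pe n F a b j y)
      = ∑ j ∈ Finset.range (k + 1), (σ u * γ j u) • Pe n F a b (j + 1) y := by
    rw [Finset.sum_range_succ']
    simp only [if_pos rfl, zero_smul, add_zero, Nat.succ_ne_zero, if_neg, Nat.add_sub_cancel]
    simp
  rw [hA, hB, ← Finset.sum_add_distrib]

lemma Good_base (g : ℝ → ℝ → ℝ) (σ : ℝ → ℝ)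
    (hF : ContDiff ℝ (⊤ : ℕ∞) F) (ha : ∀ i, ContDiff ℝ (⊤ : ℕ∞) (a i)) (hb : ∀ i, ContDiff ℝ (⊤ : ℕ∞) (b i))
    (hg : ContDiff ℝ (⊤ : ℕ∞) (Function.uncurry g)) (hσ : ContDiff ℝ (⊤ : ℕ∞) σ) :
    Good n F a b σ 0 (lieBracket (A1f n σ) (A0f n F a b g)) := by
  refine ⟨fun _ u => σ u ^ 1,
    fun t u => σ u * pdt2 g t u - deriv σ u * g t u, ?_, ?_, rfl, ?_⟩
  · intro j
    simpa using hσ.pow 1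
  · have h : Function.uncurry (fun t u => σ u * pdt2 g t u - deriv σ u * g t u)
        = fun q : ℝ × ℝ => σ q.2 * Function.uncurry (pdt2 g) q
            - deriv σ q.2 * Function.uncurry g q := rfl
    rw [h]
    exact ((hσ.comp contDiff_snd).mul (contDiff_pdt2 hg)).sub
      (((contDiff_deriv' hσ).comp contDiff_snd).mul hg)
  · funext p
    obtain ⟨t, y⟩ := p
    rw [lieBracket]
    have e1 : A1f n σ (t, y) = ((0:ℝ), σ (y (Fin.last (n + 1))) • Evec n) := rfl
    have e0 : A0f n F a b g (t, y) = ((1:ℝ), driftIV n F a b g (t, y)) := rfl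
    rw [e1, e0, fderiv_A0f n F a b g hF ha hb hg t y _,
      fderiv_A1f n σ hσ t 1 y _, driftIV_last]
    refine Prod.ext (by simp [GoodShape]) ?_
    show σ (y (Fin.last (n + 1))) • Pe n F a b 0 y
        + (σ (y (Fin.last (n + 1))) * pdt2 g t (y (Fin.last (n + 1)))) • Evec n
        - (g t (y (Fin.last (n + 1))) * deriv σ (y (Fin.last (n + 1)))) • Evec n
        = _
    simp only [GoodShape, zero_add, Finset.sum_range_one, pow_one]
    module

lemma Good_step (g : ℝ → ℝ → ℝ) (σ : ℝ → ℝ)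
    (hF : ContDiff ℝ (⊤ : ℕ∞) F) (ha : ∀ i, ContDiff ℝ (⊤ : ℕ∞) (a i)) (hb : ∀ i, ContDiff ℝ (⊤ : ℕ∞) (b i))
    (hσ : ContDiff ℝ (⊤ : ℕ∞) σ) {k : ℕ} {V : ℝ × (Fin (n + 2) → ℝ) → ℝ × (Fin (n + 2) → ℝ)}
    (hV : Good n F a b σ k V) :
    Good n F a b σ (k + 1) (lieBracket (A1f n σ) V) := by
  obtain ⟨γ, c, hγ, hc, hγk, rfl⟩ := hV
  refine ⟨fun j u => (if j ≤ k then σ u * deriv (γ j) u else 0)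
      + (if j = 0 then 0 else σ u * γ (j - 1) u),
    fun t u => σ u * pdt2 c t u - deriv σ u * c t u, ?_, ?_, ?_, ?_⟩
  · intro j
    refine ContDiff.add ?_ ?_
    · by_cases h : j ≤ k
      · simp only [if_pos h]; exact hσ.mul (contDiff_deriv' (hγ j))
      · simp only [if_neg h]; exact contDiff_const
    · by_cases h : j = 0
      · simp only [if_pos h]; exact contDiff_const
      · simp only [if_neg h]; exact hσ.mul (hγ (j - 1))
  · have h : Function.uncurry (fun t u => σ u * pdt2 c t u - deriv σ u * c t u)
        = fun q : ℝ × ℝ => σ q.2 * Function.uncurry (pdt2 c) q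
            - deriv σ q.2 * Function.uncurry c q := rfl
    rw [h]
    exact ((hσ.comp contDiff_snd).mul (contDiff_pdt2 hc)).sub
      (((contDiff_deriv' hσ).comp contDiff_snd).mul hc)
  · funext u
    have h1 : ¬(k + 1 ≤ k) := by omega
    have h2 : ¬(k + 1 = 0) := by omega
    simp only [h1, h2, if_false, zero_add, Nat.add_sub_cancel, hγk]
    ring
  · funext p
    obtain ⟨t, y⟩ := p
    rw [lieBracket]
    have e1 : A1f n σ (t, y) = ((0:ℝ), σ (y (Fin.last (n + 1))) • Evec n) := rfl
    rw [e1, fderiv_GoodShape n F a b k hγ hc hF ha hb t y _]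
    have e2 : GoodShape n F a b k γ c (t, y)
        = ((0:ℝ), (GoodShape n F a b k γ c (t, y)).2) := rfl
    rw [e2, fderiv_A1f n σ hσ t 0 y _, GoodShape_snd_last]
    refine Prod.ext (by simp [GoodShape]) ?_
    show (∑ j ∈ Finset.range (k + 1),
          ((σ (y (Fin.last (n + 1))) * deriv (γ j) (y (Fin.last (n + 1)))) • Pe n F a b j y
            + (σ (y (Fin.last (n + 1))) * γ j (y (Fin.last (n + 1)))) • Pe n F a b (j + 1) y))
        + (σ (y (Fin.last (n + 1))) * pdt2 c t (y (Fin.last (n + 1)))) • Evec n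
        - (c t (y (Fin.last (n + 1))) * deriv σ (y (Fin.last (n + 1)))) • Evec n = _
    simp only [GoodShape]
    rw [show k + 1 + 1 = k + 2 from rfl, sum_shift n F a b k γ σ (y (Fin.last (n + 1))) y]
    module

lemma Good_Lbr (g : ℝ → ℝ → ℝ) (σ : ℝ → ℝ)
    (hF : ContDiff ℝ (⊤ : ℕ∞) F) (ha : ∀ i, ContDiff ℝ (⊤ : ℕ∞) (a i)) (hb : ∀ i, ContDiff ℝ (⊤ : ℕ∞) (b i))
    (hg : ContDiff ℝ (⊤ : ℕ∞) (Function.uncurry g)) (hσ : ContDiff ℝ (⊤ : ℕ∞) σ) (k : ℕ) :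
    Good n F a b σ k (Lbr (A1f n σ) (A0f n F a b g) k) := by
  induction k with
  | zero => exact Good_base n F a b g σ hF ha hb hg hσ
  | succ k ih => exact Good_step n F a b g σ hF ha hb hσ ih

end GoodInduction

lemma LieFam_Lbr {E : Type*} [NormedAddCommGroup E] [NormedSpace ℝ E]
    (A0 A1 : E → E) (k : ℕ) :
    LieFam A0 A1 {A0, A1} (Lbr A1 A0 k) := by
  induction k with
  | zero => exact LieFam.br1 _ (LieFam.base _ (Set.mem_insert _ _))
  | succ k ih => exact LieFam.br1 _ ih

lemma vec_decomp (m : ℕ) (v : Fin m → ℝ) : v = ∑ i, v i • stdVec m i := by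
  funext j
  simp [stdVec, Finset.sum_apply, Pi.single_apply]


/-- Lie-algebraic content of Theorem 4.1: if `σ > 0` on the open interval `U` and
`x ∈ ℝ × (0,1)^{m−2} × U` satisfies `D(x) ≠ 0`, then the weak Hörmander bracket-spanning
condition `dim Λ(t,y) = m + 1` holds for all `t` and all `y` in a neighborhood of `x`
(here `m = n + 2`, so `m + 1 = n + 3`). -/
theorem stmt_8 (n : ℕ) (F : (Fin (n + 1) → ℝ) → ℝ) (a b : Fin (n + 1) → ℝ → ℝ)
    (g : ℝ → ℝ → ℝ) (σ : ℝ → ℝ)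
    (hF : ContDiff ℝ (⊤ : ℕ∞) F) (ha : ∀ i, ContDiff ℝ (⊤ : ℕ∞) (a i)) (hb : ∀ i, ContDiff ℝ (⊤ : ℕ∞) (b i))
    (hg : ContDiff ℝ (⊤ : ℕ∞) (Function.uncurry g)) (hσ : ContDiff ℝ (⊤ : ℕ∞) σ)
    (U : Set ℝ) (hUopen : IsOpen U) (hUconn : U.OrdConnected) (hσpos : ∀ u ∈ U, 0 < σ u)
    (x : Fin (n + 2) → ℝ)
    (hint : ∀ i : Fin (n + 2), 0 < (i : ℕ) → (i : ℕ) < n + 1 → x i ∈ Set.Ioo (0 : ℝ) 1)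
    (hlast : x (Fin.last (n + 1)) ∈ U)
    (hD : detD n F a b (projFirst n x) ≠ 0) :
    ∃ ε > 0, ∀ (t : ℝ) (y : Fin (n + 2) → ℝ), ‖y - x‖ < ε →
      Module.finrank ℝ (Submodule.span ℝ
        {w : ℝ × (Fin (n + 2) → ℝ) |
          ∃ V, LieFam (A0f n F a b g) (A1f n σ) {A0f n F a b g, A1f n σ} V ∧ V (t, y) = w})
      = n + 3 := by
  classical
  have hcont1 : Continuous fun y : Fin (n + 2) → ℝ => σ (y (Fin.last (n + 1))) :=
    hσ.continuous.comp (continuous_apply _)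
  have hcont2 : Continuous fun y : Fin (n + 2) → ℝ => detD n F a b (projFirst n y) := by
    have hM : Continuous fun y : Fin (n + 2) → ℝ =>
        (Matrix.of fun i k : Fin (n + 1) =>
          (pd1 n)^[(k : ℕ) + 1] (Jfun n F a b i) (projFirst n y)) := by
      refine continuous_matrix fun i k => ?_
      exact ((contDiff_pd1_iter n (contDiff_Jfun n F a b hF ha hb i) _).continuous).comp
        (contDiff_projFirst n).continuous
    exact hM.matrix_det
  have hσx : 0 < σ (x (Fin.last (n + 1))) := hσpos _ hlast
  have hO : IsOpen {y : Fin (n + 2) → ℝ |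
      0 < σ (y (Fin.last (n + 1))) ∧ detD n F a b (projFirst n y) ≠ 0} := by
    have h1 : IsOpen {y : Fin (n + 2) → ℝ | 0 < σ (y (Fin.last (n + 1)))} :=
      isOpen_lt continuous_const hcont1
    have h2 : IsOpen {y : Fin (n + 2) → ℝ | detD n F a b (projFirst n y) ≠ 0} :=
      isOpen_compl_singleton.preimage hcont2
    exact h1.inter h2
  obtain ⟨ε, hεpos, hball⟩ := Metric.isOpen_iff.mp hO x ⟨hσx, hD⟩
  refine ⟨ε, hεpos, fun t y hy => ?_⟩
  obtain ⟨hσy, hdet⟩ := hball (by rwa [Metric.mem_ball, dist_eq_norm])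
  set S := Submodule.span ℝ
    {w : ℝ × (Fin (n + 2) → ℝ) |
      ∃ V, LieFam (A0f n F a b g) (A1f n σ) {A0f n F a b g, A1f n σ} V ∧ V (t, y) = w}
    with hSdef
  have hmem : ∀ k, Lbr (A1f n σ) (A0f n F a b g) k (t, y) ∈ S := fun k =>
    Submodule.subset_span ⟨_, LieFam_Lbr _ _ k, rfl⟩
  have hA1mem : A1f n σ (t, y) ∈ S :=
    Submodule.subset_span ⟨_, LieFam.base _ (Set.mem_insert_of_mem _ rfl), rfl⟩
  have hA0mem : A0f n F a b g (t, y) ∈ S :=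
    Submodule.subset_span ⟨_, LieFam.base _ (Set.mem_insert _ _), rfl⟩
  have hE : ((0:ℝ), Evec n) ∈ S := by
    have h : ((0:ℝ), Evec n) = (σ (y (Fin.last (n + 1))))⁻¹ • A1f n σ (t, y) := by
      rw [show A1f n σ (t, y) = ((0:ℝ), σ (y (Fin.last (n + 1))) • Evec n) from rfl,
        Prod.smul_mk, smul_zero, smul_smul, inv_mul_cancel₀ hσy.ne', one_smul]
    rw [h]
    exact S.smul_mem _ hA1mem
  have hPe : ∀ k, ((0:ℝ), Pe n F a b k y) ∈ S := by
    intro k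
    induction k using Nat.strong_induction_on with
    | _ k ih =>
    obtain ⟨γ, c, hγ, hc, hγk, hVeq⟩ := Good_Lbr n F a b g σ hF ha hb hg hσ k
    have hval : Lbr (A1f n σ) (A0f n F a b g) k (t, y) = ((0:ℝ),
        (∑ j ∈ Finset.range (k + 1), γ j (y (Fin.last (n + 1))) • Pe n F a b j y)
          + c t (y (Fin.last (n + 1))) • Evec n) := by
      rw [hVeq]; rfl
    have hmem' := hmem k
    rw [hval] at hmem'
    have key : (γ k (y (Fin.last (n + 1)))) • ((0:ℝ), Pe n F a b k y)
        = ((0:ℝ), (∑ j ∈ Finset.range (k + 1), γ j (y (Fin.last (n + 1))) • Pe n F a b j y)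
            + c t (y (Fin.last (n + 1))) • Evec n)
          - (∑ j ∈ Finset.range k, γ j (y (Fin.last (n + 1))) • ((0:ℝ), Pe n F a b j y))
          - c t (y (Fin.last (n + 1))) • ((0:ℝ), Evec n) := by
      apply Prod.ext
      · simp [Prod.fst_sum]
      · simp only [Prod.snd_sub, Prod.snd_sum, Prod.smul_mk, smul_zero]
        rw [Finset.sum_range_succ]
        abel
    have hmemk : (γ k (y (Fin.last (n + 1)))) • ((0:ℝ), Pe n F a b k y) ∈ S := by
      rw [key]
      refine S.sub_mem (S.sub_mem hmem' (Submodule.sum_mem _ fun j hj =>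
        S.smul_mem _ (ih j (Finset.mem_range.mp hj)))) (S.smul_mem _ hE)
    have hne : γ k (y (Fin.last (n + 1))) ≠ 0 := by
      rw [hγk]
      exact pow_ne_zero _ hσy.ne'
    have h2 : ((0:ℝ), Pe n F a b k y)
        = (γ k (y (Fin.last (n + 1))))⁻¹ • (γ k (y (Fin.last (n + 1))) • ((0:ℝ), Pe n F a b k y)) := by
      rw [smul_smul, inv_mul_cancel₀ hne, one_smul]
    rw [h2]
    exact S.smul_mem _ hmemk
  have hstd : ∀ i' : Fin (n + 1), ((0:ℝ), stdVec (n + 2) (Fin.castSucc i')) ∈ S := by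
    intro i'
    set M : Matrix (Fin (n + 1)) (Fin (n + 1)) ℝ := Matrix.of fun i k : Fin (n + 1) =>
      (pd1 n)^[(k : ℕ) + 1] (Jfun n F a b i) (projFirst n y) with hMdef
    have hMdet : M.det ≠ 0 := hdet
    set w : Fin (n + 1) → ℝ := Matrix.mulVec M⁻¹ (Pi.single i' 1) with hw
    have hMw : Matrix.mulVec M w = Pi.single i' 1 := by
      rw [hw, Matrix.mulVec_mulVec, Matrix.mul_nonsing_inv _ (isUnit_iff_ne_zero.mpr hMdet),
        Matrix.one_mulVec]
    have key : ((0:ℝ), stdVec (n + 2) (Fin.castSucc i'))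
        = ∑ k : Fin (n + 1), w k • ((0:ℝ), Pe n F a b (k : ℕ) y) := by
      apply Prod.ext
      · simp [Prod.fst_sum]
      · rw [Prod.snd_sum]
        funext i
        rw [Finset.sum_apply]
        induction i using Fin.lastCases with
        | last =>
          simp [stdVec, Pi.single_apply, Pe_last, (Fin.castSucc_lt_last i').ne']
        | cast i'' =>
          have hRHS : ∑ k : Fin (n + 1), (w k • ((0:ℝ), Pe n F a b (k : ℕ) y)).2 (Fin.castSucc i'')
              = Matrix.mulVec M w i'' := by
            simp only [Prod.smul_mk, Pi.smul_apply, smul_eq_mul, Pe_castSucc,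
              Matrix.mulVec, dotProduct, hMdef, Matrix.of_apply]
            exact Finset.sum_congr rfl fun k _ => mul_comm _ _
          rw [hRHS, hMw]
          simp [stdVec, Pi.single_apply, Fin.castSucc_inj]
    rw [key]
    exact Submodule.sum_mem _ fun k _ => S.smul_mem _ (hPe (k : ℕ))
  have hlastv : ((0:ℝ), stdVec (n + 2) (Fin.last (n + 1))) ∈ S := by
    have h : ((0:ℝ), stdVec (n + 2) (Fin.last (n + 1)))
        = ((0:ℝ), Evec n) - ((0:ℝ), stdVec (n + 2) (Fin.castSucc 0)) := by
      apply Prod.ext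
      · simp
      · rw [Fin.castSucc_zero]
        show stdVec (n + 2) (Fin.last (n + 1))
          = (stdVec (n + 2) 0 + stdVec (n + 2) (Fin.last (n + 1))) - stdVec (n + 2) 0
        abel
    rw [h]
    exact S.sub_mem hE (hstd 0)
  have hall : ∀ i : Fin (n + 2), ((0:ℝ), stdVec (n + 2) i) ∈ S := by
    intro i
    induction i using Fin.lastCases with
    | last => exact hlastv
    | cast i' => exact hstd i'
  have htime : ((1:ℝ), (0 : Fin (n + 2) → ℝ)) ∈ S := by
    have key : ((1:ℝ), (0 : Fin (n + 2) → ℝ))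
        = A0f n F a b g (t, y)
          - ∑ i : Fin (n + 2), driftIV n F a b g (t, y) i • ((0:ℝ), stdVec (n + 2) i) := by
      rw [show A0f n F a b g (t, y) = ((1:ℝ), driftIV n F a b g (t, y)) from rfl]
      apply Prod.ext
      · simp [Prod.fst_sum]
      · simp only [Prod.snd_sub, Prod.snd_sum, Prod.smul_mk, smul_zero]
        rw [← vec_decomp]
        abel
    rw [key]
    exact S.sub_mem hA0mem (Submodule.sum_mem _ fun i _ => S.smul_mem _ (hall i))
  have htop : S = ⊤ := by
    rw [eq_top_iff]
    rintro ⟨r, v⟩ -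
    have h : ((r, v) : ℝ × (Fin (n + 2) → ℝ))
        = r • ((1:ℝ), (0 : Fin (n + 2) → ℝ))
          + ∑ i : Fin (n + 2), v i • ((0:ℝ), stdVec (n + 2) i) := by
      apply Prod.ext
      · simp [Prod.fst_sum]
      · simp only [Prod.snd_add, Prod.snd_sum, Prod.smul_mk, smul_zero, zero_add]
        exact vec_decomp _ v
    rw [h]
    exact S.add_mem (S.smul_mem _ htime) (Submodule.sum_mem _ fun i _ => S.smul_mem _ (hall i))
  rw [htop, finrank_top, Module.finrank_prod, Module.finrank_self,
    Module.finrank_fin_fun]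
  omega
end
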